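/- arXiv:2503.22150 — 3 statements merged into one kernel-verified Lean document; each statement's English description precedes it below -/
import Mathlib

section
/- There is no factorization in ℤ[T,U,V] of the form T^2·P(T,U) + A(T,U,V)·R^4(U,V) + B(T,U,V)·R^5(U,V) = S_1(T+U,U,V)·S_2(T,U,V), where P is monic of degree 4 in T with coefficients polynomials in U, A has total degree 2, B has total degree 1, R^n(U,V)=Σ_{k=0}^n U^kV^{n-k}, S_1(T,U,V) = T^3 + t_1(U+V)T^2 + (t_2^0(U^2+V^2)+t_2^1 UV)T + (t_3^0(U^3+V^3)+t_3^1(U^2V+UV^2)), S_2 of the same symmetric form with coefficients n_1, n_2^0, n_2^1, n_3^0, n_3^1, unless the coefficient tuple (t_1,t_2^0,t_2^1,t_3^0,t_3^1,n_1,n_2^0,n_2^1,n_3^0,n_3^1) is one of: (0,0,0,0,0,0,0,0,0,0), (−1,1,1,−1,−1,1,0,0,0,0), (−1,0,0,0,0,1,1,1,1,1), (−2,2,3,0,−1,2,2,3,0,1). -/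
open MvPolynomial

/-- The polynomial ring `ℤ[T,U,V]`. -/
abbrev MP : Type := MvPolynomial (Fin 3) ℤ

noncomputable section

/-- The variable `T`. -/
def T : MP := X 0
/-- The variable `U`. -/
def U : MP := X 1
/-- The variable `V`. -/
def V : MP := X 2

/-- `R n (U,V) = ∑_{k=0}^{n} U^k V^(n-k)` viewed inside `ℤ[T,U,V]`. -/
def R (n : ℕ) : MP := ∑ k ∈ Finset.range (n + 1), U ^ k * V ^ (n - k)

/-- A monic linear symmetric form `t + a(U+V)` evaluated at `t`. -/
def lin (a : ℤ) (t : MP) : MP := t + C a * (U + V)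

/-- A monic quadratic form `t² + a₁(U+V)t + a₂(U²+V²) + a₃ UV` symmetric in `U,V`. -/
def quad (a₁ a₂ a₃ : ℤ) (t : MP) : MP :=
  t ^ 2 + C a₁ * (U + V) * t + C a₂ * (U ^ 2 + V ^ 2) + C a₃ * (U * V)

/-- A monic cubic form
`t³ + a₁(U+V)t² + (a₂(U²+V²)+a₃UV)t + (a₄(U³+V³)+a₅(U²V+UV²))` symmetric in `U,V`. -/
def cub (a₁ a₂ a₃ a₄ a₅ : ℤ) (t : MP) : MP :=
  t ^ 3 + C a₁ * (U + V) * t ^ 2 + (C a₂ * (U ^ 2 + V ^ 2) + C a₃ * (U * V)) * t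
    + (C a₄ * (U ^ 3 + V ^ 3) + C a₅ * (U ^ 2 * V + U * V ^ 2))

end


noncomputable section
/-- Kronecker substitution `T ↦ x⁴⁹, U ↦ x⁷, V ↦ x`. -/
def Φ : MP →+* Polynomial ℤ :=
  eval₂Hom Polynomial.C (fun i => Polynomial.X ^ (if i = 0 then 49 else if i = 1 then 7 else 1))

@[simp] lemma ΦT : Φ T = Polynomial.X ^ 49 := by simp [Φ, T]
@[simp] lemma ΦU : Φ U = Polynomial.X ^ 7 := by simp [Φ, U]
@[simp] lemma ΦV : Φ V = Polynomial.X ^ 1 := by simp [Φ, V]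
@[simp] lemma ΦC (a : ℤ) : Φ (C a) = Polynomial.C a := by simp [Φ]
end

lemma coeff_Φ_eq_zero (p : MP) (D j : ℕ) (hp : p.totalDegree ≤ D)
    (hj : ∀ k a b : ℕ, k + a + b ≤ D → 49 * k + 7 * a + b ≠ j) :
    (Φ p).coeff j = 0 := by
  conv_lhs => rw [← p.support_sum_monomial_coeff]
  rw [map_sum, Polynomial.finset_sum_coeff]
  apply Finset.sum_eq_zero
  intro m hm
  have hdeg : m 0 + m 1 + m 2 ≤ D := by
    have h1 := MvPolynomial.le_totalDegree hm
    have hsum : (m.sum fun _ e => e) = m 0 + m 1 + m 2 := by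
      rw [Finsupp.sum_fintype _ _ (fun _ => rfl)]
      simp [Fin.sum_univ_three]
    omega
  have hprod : (Φ (monomial m (coeff m p))) =
      Polynomial.C (coeff m p) * Polynomial.X ^ (49 * m 0 + 7 * m 1 + m 2) := by
    rw [Φ, eval₂Hom_monomial]
    congr 1
    rw [Finsupp.prod_fintype _ _ (fun _ => pow_zero _)]
    rw [Fin.prod_univ_three]
    simp only [show ((0:Fin 3) = 0) = True by simp, show ((1:Fin 3) = 0) = False by decide,
      show ((1:Fin 3) = 1) = True by simp, show ((2:Fin 3) = 0) = False by decide,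
      show ((2:Fin 3) = 1) = False by decide, if_true, if_false]
    simp only [← pow_mul, ← pow_add]
    ring_nf
  rw [hprod, Polynomial.coeff_C_mul, Polynomial.coeff_X_pow,
    if_neg (fun h => hj _ _ _ hdeg h.symm), mul_zero]

lemma coeff_Φ_aevalU (p : Polynomial ℤ) (j : ℕ) (hj : j % 7 ≠ 0) :
    (Φ (Polynomial.aeval U p)).coeff j = 0 := by
  induction p using Polynomial.induction_on' with
  | add f g hf hg => rw [map_add, map_add, Polynomial.coeff_add, hf, hg, add_zero]
  | monomial n a =>
      rw [Polynomial.aeval_monomial]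
      simp only [map_mul, map_pow, ΦU]
      have : (algebraMap ℤ MP) a = C a := rfl
      rw [this, ΦC, ← pow_mul, Polynomial.coeff_C_mul, Polynomial.coeff_X_pow]
      rw [if_neg (by omega), mul_zero]

private theorem key_endgame (t₁ t₂ t₃ t₄ t₅ n₁ n₂ n₃ n₄ n₅ : ℤ)
    (E1 : 1 * n₁ + 1 * t₁ = 0)
    (E2 : 1 * n₃ + 3 * n₁ + 1 * t₃ + 2 * t₁ + 2 * t₁ * n₁ = 0)
    (E3 : 1 * n₂ + 1 * t₂ + 1 * t₁ * n₁ = 0)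
    (E4 : 1 * n₅ + 3 * n₃ + 3 * n₁ + 1 * t₅ + 1 * t₃ + 1 * t₃ * n₁ + 1 * t₂ * n₁ + 1 * t₁ + 1 * t₁ * n₃ + 1 * t₁ * n₂ + 4 * t₁ * n₁ = 0)
    (E5 : 1 * n₅ + 3 * n₂ + 1 * t₅ + 1 * t₃ * n₁ + 1 * t₂ + 1 * t₂ * n₁ + 1 * t₁ * n₃ + 1 * t₁ * n₂ + 2 * t₁ * n₁ = 0)
    (E6 : 1 * n₄ + 1 * t₄ + 1 * t₂ * n₁ + 1 * t₁ * n₂ = 0)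
    (E7 : 3 * n₃ + (-3) * n₂ + 1 * n₁ + (-1) * t₅ * n₁ + 1 * t₄ * n₁ + (-1) * t₃ * n₃ + 1 * t₃ * n₂ + 1 * t₂ * n₃ + (-2) * t₂ * n₂ + (-1) * t₁ * n₅ + 1 * t₁ * n₄ + 1 * t₁ * n₁ = 0)
    (E8 : 3 * n₅ + (-3) * n₄ + 3 * n₂ + 1 * t₅ * n₁ + (-1) * t₄ * n₁ + 1 * t₃ * n₃ + (-1) * t₃ * n₂ + 1 * t₃ * n₁ + (-1) * t₂ * n₃ + 2 * t₂ * n₂ + 1 * t₁ * n₅ + (-1) * t₁ * n₄ + 2 * t₁ * n₃ + 1 * t₁ * n₁ = 0)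
    (E9 : 3 * n₄ + 1 * t₅ * n₁ + 1 * t₃ * n₂ + 1 * t₂ * n₃ + (-1) * t₂ * n₂ + 1 * t₂ * n₁ + 1 * t₁ * n₅ + 2 * t₁ * n₂ = 0)
    (E10 : 3 * n₅ + (-3) * n₄ + 1 * n₂ + 1 * t₃ * n₃ + (-1) * t₃ * n₂ + (-1) * t₂ * n₃ + 2 * t₂ * n₂ + 2 * t₁ * n₅ + (-2) * t₁ * n₄ + 1 * t₁ * n₃ = 0) :
    (t₁, t₂, t₃, t₄, t₅, n₁, n₂, n₃, n₄, n₅) = (0, 0, 0, 0, 0, 0, 0, 0, 0, 0) ∨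
    (t₁, t₂, t₃, t₄, t₅, n₁, n₂, n₃, n₄, n₅) = (-1, 1, 1, -1, -1, 1, 0, 0, 0, 0) ∨
    (t₁, t₂, t₃, t₄, t₅, n₁, n₂, n₃, n₄, n₅) = (-1, 0, 0, 0, 0, 1, 1, 1, 1, 1) ∨
    (t₁, t₂, t₃, t₄, t₅, n₁, n₂, n₃, n₄, n₅) = (-2, 2, 3, 0, -1, 2, 2, 3, 0, 1) := by
  have hn1 : n₁ = -t₁ := by linarith
  subst hn1
  have hn2 : n₂ = t₁^2 - t₂ := by linear_combination E3
  subst hn2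
  have hn3 : n₃ = t₁ + 2*t₁^2 - t₃ := by linear_combination E2
  subst hn3
  have hn4 : n₄ = 2*t₁*t₂ - t₁^3 - t₄ := by linear_combination E6
  subst hn4
  have hn5 : n₅ = 2*t₂ + 2*t₁*t₃ + 2*t₁*t₂ - 2*t₁^2 - 3*t₁^3 - t₅ := by linear_combination E5
  subst hn5
  have hkey : 2 * ((1 + t₁) * (t₂ + t₁*t₃ - t₁^2 * (1 + t₁))) = 0 := by
    linear_combination E10 - E8
  have hkey' : (1 + t₁) * (t₂ + t₁*t₃ - t₁^2 * (1 + t₁)) = 0 := by linarith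
  by_cases ht : t₁ = -1
  · subst ht
    have h2 : 2*t₃ = 2*t₂ := by linear_combination -E4
    have hb2 : 6 * (t₂ * (t₂ - 1)) = 0 := by
      linear_combination 2*E7 - 4*E8 - (3*(t₃ - t₂) - 3)*h2
    have hb3 : t₂ * (t₂ - 1) = 0 := by linarith
    rcases mul_eq_zero.mp hb3 with hb | hb
    · -- t₂ = 0 : solution 3
      subst hb
      have h3 : t₃ = 0 := by omega
      subst h3
      have h4 : t₄ = 0 := by linarith [E8, E9]
      have h5 : t₅ = 0 := by linarith [E8, E9]
      subst h4; subst h5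
      norm_num
    · -- t₂ = 1 : solution 2
      have hb' : t₂ = 1 := by omega
      subst hb'
      have h3 : t₃ = 1 := by omega
      subst h3
      have h4 : t₄ = -1 := by linarith [E8, E9]
      have h5 : t₅ = -1 := by linarith [E8, E9]
      subst h4; subst h5
      norm_num
  · -- t₁ ≠ -1
    have hfac : t₂ + t₁*t₃ - t₁^2 * (1 + t₁) = 0 := by
      rcases mul_eq_zero.mp hkey' with h | h
      · exact absurd (by omega : t₁ = -1) ht
      · exact h
    have h2c : (1 + t₁) * (2*t₃ - 2*t₁^2 - t₁) = 0 := by linear_combination -E4 + 2*hfac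
    have h3 : 2*t₃ - 2*t₁^2 - t₁ = 0 := by
      rcases mul_eq_zero.mp h2c with h | h
      · exact absurd (by omega : t₁ = -1) ht
      · exact h
    obtain ⟨g, hg⟩ : ∃ g, t₁ = 2*g := ⟨t₃ - t₁^2, by linarith⟩
    subst hg
    have ht3 : t₃ = 4*g^2 + g := by linarith
    subst ht3
    have ht2 : t₂ = 2*g^2 := by linear_combination hfac
    subst ht2
    by_cases hg0 : g = 0
    · subst hg0
      have h4 : t₄ = 0 := by linarith [E8, E9]
      have h5 : t₅ = 0 := by linarith [E8, E9]
      subst h4; subst h5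
      norm_num
    · have hginner : g * (1 + g - 4*g^2 - 8*g^3 + 4*t₅ - 4*t₄) = 0 := by
        linear_combination E7
      have hinner : 1 + g - 4*g^2 - 8*g^3 + 4*t₅ - 4*t₄ = 0 :=
        (mul_eq_zero.mp hginner).resolve_left hg0
      have hcube : (g + 1) * (8*g^2 + 4*g + 3) = 0 := by
        linear_combination (3 + 4*g) * hinner + 4*E8
      have hgm : g = -1 := by
        rcases mul_eq_zero.mp hcube with h | h
        · omega
        · nlinarith [sq_nonneg (2*g + 1), sq_nonneg g]
      subst hgm
      have h4 : t₄ = 0 := by linarith [hinner, E9]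
      have h5 : t₅ = -1 := by linarith [hinner, E9]
      subst h4; subst h5
      norm_num

set_option maxHeartbeats 3000000 in
set_option maxRecDepth 16000 in
/-- Chern polynomial equation for a uniform 6-bundle over `ℙ⁴` of splitting type `(2;3,3;1,0)`:
if `T²·P(T,U) + A·R⁴(U,V) + B·R⁵(U,V) = S₁(T+U,U,V)·S₂(T,U,V)` with `P` monic of degree 4
in `T` with coefficients polynomials in `U`, `A` of total degree 2 and `B` of total degree 1,
then the coefficient tuple is one of the four listed solutions. -/
theorem uniform_rank6_splitting_33 (t₁ t₂ t₃ t₄ t₅ n₁ n₂ n₃ n₄ n₅ : ℤ)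
    (p₀ p₁ p₂ p₃ : Polynomial ℤ) (A B : MP)
    (hA : A.totalDegree ≤ 2) (hB : B.totalDegree ≤ 1)
    (heq : T ^ 2 * (T ^ 4 + Polynomial.aeval U p₃ * T ^ 3 + Polynomial.aeval U p₂ * T ^ 2
          + Polynomial.aeval U p₁ * T + Polynomial.aeval U p₀)
        + A * R 4 + B * R 5
      = cub t₁ t₂ t₃ t₄ t₅ (T + U) * cub n₁ n₂ n₃ n₄ n₅ T) :
    (t₁, t₂, t₃, t₄, t₅, n₁, n₂, n₃, n₄, n₅) = (0, 0, 0, 0, 0, 0, 0, 0, 0, 0) ∨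
    (t₁, t₂, t₃, t₄, t₅, n₁, n₂, n₃, n₄, n₅) = (-1, 1, 1, -1, -1, 1, 0, 0, 0, 0) ∨
    (t₁, t₂, t₃, t₄, t₅, n₁, n₂, n₃, n₄, n₅) = (-1, 0, 0, 0, 0, 1, 1, 1, 1, 1) ∨
    (t₁, t₂, t₃, t₄, t₅, n₁, n₂, n₃, n₄, n₅) = (-2, 2, 3, 0, -1, 2, 2, 3, 0, 1) := by
  have h0 := congrArg (⇑Φ) heq
  have hR4 : Φ (R 4) = Polynomial.X ^ 28 + Polynomial.X ^ 22 + Polynomial.X ^ 16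
      + Polynomial.X ^ 10 + Polynomial.X ^ 4 := by
    unfold _root_.R
    simp only [Finset.sum_range_succ, Finset.sum_range_zero, map_add, map_mul, map_pow, ΦU, ΦV,
      zero_add]
    norm_num
    ring
  have hR5 : Φ (R 5) = Polynomial.X ^ 35 + Polynomial.X ^ 29 + Polynomial.X ^ 23
      + Polynomial.X ^ 17 + Polynomial.X ^ 11 + Polynomial.X ^ 5 := by
    unfold _root_.R
    simp only [Finset.sum_range_succ, Finset.sum_range_zero, map_add, map_mul, map_pow, ΦU, ΦV,
      zero_add]
    norm_num
    ring
  have hLeq : Φ (T ^ 2 * (T ^ 4 + Polynomial.aeval U p₃ * T ^ 3 + Polynomial.aeval U p₂ * T ^ 2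
          + Polynomial.aeval U p₁ * T + Polynomial.aeval U p₀)
        + A * R 4 + B * R 5)
      = Polynomial.X ^ 294
        + Φ (Polynomial.aeval U p₃) * Polynomial.X ^ 245
        + Φ (Polynomial.aeval U p₂) * Polynomial.X ^ 196
        + Φ (Polynomial.aeval U p₁) * Polynomial.X ^ 147
        + Φ (Polynomial.aeval U p₀) * Polynomial.X ^ 98
        + Φ A * Polynomial.X ^ 28 + Φ A * Polynomial.X ^ 22 + Φ A * Polynomial.X ^ 16
        + Φ A * Polynomial.X ^ 10 + Φ A * Polynomial.X ^ 4
        + Φ B * Polynomial.X ^ 35 + Φ B * Polynomial.X ^ 29 + Φ B * Polynomial.X ^ 23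
        + Φ B * Polynomial.X ^ 17 + Φ B * Polynomial.X ^ 11 + Φ B * Polynomial.X ^ 5 := by
    simp only [map_add, map_mul, map_pow, ΦT, hR4, hR5]
    ring
  have hReq : Φ (cub t₁ t₂ t₃ t₄ t₅ (T + U) * cub n₁ n₂ n₃ n₄ n₅ T)
      = Polynomial.C (t₄ * n₄) * Polynomial.X ^ 6
        + Polynomial.C (t₅ * n₄ + t₄ * n₅ + t₂ * n₄) * Polynomial.X ^ 12
        + Polynomial.C (t₅ * n₅ + t₅ * n₄ + t₄ * n₅ + t₃ * n₄ + t₂ * n₅ + t₁ * n₄) * Polynomial.X ^ 18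
        + Polynomial.C (n₄ + t₅ * n₅ * 2 + t₄ * n₄ * 2 + t₃ * n₅ + t₂ * n₅ + t₂ * n₄ + t₁ * n₅ + t₁ * n₄) * Polynomial.X ^ 24
        + Polynomial.C (n₅ + t₅ * n₅ + t₅ * n₄ + t₄ * n₅ + t₃ * n₅ + t₂ * n₅ + t₂ * n₄ + t₁ * n₅ * 2) * Polynomial.X ^ 30
        + Polynomial.C (n₅ + t₅ * n₄ + t₄ * n₅ + t₃ * n₄ + t₂ * n₅ + t₁ * n₅ + t₁ * n₄) * Polynomial.X ^ 36
        + Polynomial.C (n₄ + t₄ * n₄ + t₂ * n₄ + t₁ * n₄) * Polynomial.X ^ 42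
        + Polynomial.C (t₄ * n₂ + t₂ * n₄) * Polynomial.X ^ 54
        + Polynomial.C (t₅ * n₂ + t₄ * n₃ + t₃ * n₄ + t₂ * n₅ + t₂ * n₂ + t₁ * n₄ * 2) * Polynomial.X ^ 60
        + Polynomial.C (n₄ * 3 + t₅ * n₃ + t₅ * n₂ + t₄ * n₂ + t₃ * n₅ + t₃ * n₂ + t₂ * n₅ + t₂ * n₄ + t₂ * n₃ + t₁ * n₅ * 2 + t₁ * n₄ * 2 + t₁ * n₂) * Polynomial.X ^ 66
        + Polynomial.C (n₅ * 3 + n₂ + t₅ * n₃ + t₅ * n₂ + t₄ * n₂ + t₃ * n₅ + t₃ * n₃ + t₂ * n₅ + t₂ * n₄ + t₂ * n₂ * 2 + t₁ * n₅ * 4 + t₁ * n₃ + t₁ * n₂) * Polynomial.X ^ 72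
        + Polynomial.C (n₅ * 3 + n₃ + t₅ * n₂ + t₄ * n₃ + t₃ * n₄ + t₃ * n₂ + t₂ * n₅ + t₂ * n₃ + t₁ * n₅ * 2 + t₁ * n₄ * 2 + t₁ * n₃ + t₁ * n₂) * Polynomial.X ^ 78
        + Polynomial.C (n₄ * 3 + n₂ + t₄ * n₂ + t₂ * n₄ + t₂ * n₂ + t₁ * n₄ * 2 + t₁ * n₂) * Polynomial.X ^ 84
        + Polynomial.C (t₄ * n₁ + t₂ * n₂ + t₁ * n₄) * Polynomial.X ^ 102
        + Polynomial.C (n₄ * 3 + t₅ * n₁ + t₄ * n₁ + t₃ * n₂ + t₂ * n₃ + t₂ * n₁ + t₁ * n₅ + t₁ * n₄ + t₁ * n₂ * 2) * Polynomial.X ^ 108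
        + Polynomial.C (n₅ * 3 + n₂ * 3 + t₅ * n₁ * 2 + t₃ * n₃ + t₃ * n₁ + t₂ * n₂ * 2 + t₂ * n₁ + t₁ * n₅ * 2 + t₁ * n₃ * 2 + t₁ * n₂ * 2 + t₁ * n₁) * Polynomial.X ^ 114
        + Polynomial.C (n₅ * 3 + n₃ * 3 + n₁ + t₅ * n₁ + t₄ * n₁ + t₃ * n₂ + t₃ * n₁ + t₂ * n₃ + t₂ * n₁ + t₁ * n₅ + t₁ * n₄ + t₁ * n₃ * 2 + t₁ * n₂ * 2 + t₁ * n₁ * 2) * Polynomial.X ^ 120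
        + Polynomial.C (n₄ * 3 + n₂ * 3 + n₁ + t₄ * n₁ + t₂ * n₂ + t₂ * n₁ + t₁ * n₄ + t₁ * n₂ * 2 + t₁ * n₁) * Polynomial.X ^ 126
        + Polynomial.C (n₄ + t₄ + t₂ * n₁ + t₁ * n₂) * Polynomial.X ^ 150
        + Polynomial.C (n₅ + n₂ * 3 + t₅ + t₃ * n₁ + t₂ + t₂ * n₁ + t₁ * n₃ + t₁ * n₂ + t₁ * n₁ * 2) * Polynomial.X ^ 156
        + Polynomial.C (n₅ + n₃ * 3 + n₁ * 3 + t₅ + t₃ + t₃ * n₁ + t₂ * n₁ + t₁ + t₁ * n₃ + t₁ * n₂ + t₁ * n₁ * 4) * Polynomial.X ^ 162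
        + Polynomial.C (1 + n₄ + n₂ * 3 + n₁ * 3 + t₄ + t₂ + t₂ * n₁ + t₁ + t₁ * n₂ + t₁ * n₁ * 2) * Polynomial.X ^ 168
        + Polynomial.C (n₂ + t₂ + t₁ * n₁) * Polynomial.X ^ 198
        + Polynomial.C (n₃ + n₁ * 3 + t₃ + t₁ * 2 + t₁ * n₁ * 2) * Polynomial.X ^ 204
        + Polynomial.C (3 + n₂ + n₁ * 3 + t₂ + t₁ * 2 + t₁ * n₁) * Polynomial.X ^ 210
        + Polynomial.C (n₁ + t₁) * Polynomial.X ^ 246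
        + Polynomial.C (3 + n₁ + t₁) * Polynomial.X ^ 252
        + Polynomial.C (1) * Polynomial.X ^ 294 := by
    simp only [cub, map_add, map_mul, map_pow, map_one, map_intCast, map_ofNat, ΦT, ΦU, ΦV, ΦC,
      Polynomial.C_add, Polynomial.C_mul, Polynomial.C_1, Polynomial.C_neg]
    ring
  rw [hLeq, hReq] at h0
  have hc246 := congrArg (fun q => Polynomial.coeff q 246) h0
  simp only [Polynomial.coeff_add, Polynomial.coeff_mul_X_pow', Polynomial.coeff_C_mul,
    Polynomial.coeff_X_pow, Polynomial.coeff_C, Nat.reduceSub, Nat.reduceLeDiff, Nat.reduceEqDiff,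
    reduceIte, coeff_Φ_eq_zero A 2 242 hA (by omega), coeff_Φ_eq_zero A 2 236 hA (by omega), coeff_Φ_eq_zero A 2 230 hA (by omega), coeff_Φ_eq_zero A 2 224 hA (by omega), coeff_Φ_eq_zero A 2 218 hA (by omega), coeff_Φ_eq_zero B 1 241 hB (by omega), coeff_Φ_eq_zero B 1 235 hB (by omega), coeff_Φ_eq_zero B 1 229 hB (by omega), coeff_Φ_eq_zero B 1 223 hB (by omega), coeff_Φ_eq_zero B 1 217 hB (by omega), coeff_Φ_eq_zero B 1 211 hB (by omega), coeff_Φ_aevalU p₃ 1 (by norm_num), coeff_Φ_aevalU p₂ 50 (by norm_num), coeff_Φ_aevalU p₁ 99 (by norm_num), coeff_Φ_aevalU p₀ 148 (by norm_num), mul_zero, zero_mul, mul_one, one_mul, add_zero, zero_add] at hc246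
  have hc204 := congrArg (fun q => Polynomial.coeff q 204) h0
  simp only [Polynomial.coeff_add, Polynomial.coeff_mul_X_pow', Polynomial.coeff_C_mul,
    Polynomial.coeff_X_pow, Polynomial.coeff_C, Nat.reduceSub, Nat.reduceLeDiff, Nat.reduceEqDiff,
    reduceIte, coeff_Φ_eq_zero A 2 200 hA (by omega), coeff_Φ_eq_zero A 2 194 hA (by omega), coeff_Φ_eq_zero A 2 188 hA (by omega), coeff_Φ_eq_zero A 2 182 hA (by omega), coeff_Φ_eq_zero A 2 176 hA (by omega), coeff_Φ_eq_zero B 1 199 hB (by omega), coeff_Φ_eq_zero B 1 193 hB (by omega), coeff_Φ_eq_zero B 1 187 hB (by omega), coeff_Φ_eq_zero B 1 181 hB (by omega), coeff_Φ_eq_zero B 1 175 hB (by omega), coeff_Φ_eq_zero B 1 169 hB (by omega), coeff_Φ_aevalU p₂ 8 (by norm_num), coeff_Φ_aevalU p₁ 57 (by norm_num), coeff_Φ_aevalU p₀ 106 (by norm_num), mul_zero, zero_mul, mul_one, one_mul, add_zero, zero_add] at hc204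
  have hc198 := congrArg (fun q => Polynomial.coeff q 198) h0
  simp only [Polynomial.coeff_add, Polynomial.coeff_mul_X_pow', Polynomial.coeff_C_mul,
    Polynomial.coeff_X_pow, Polynomial.coeff_C, Nat.reduceSub, Nat.reduceLeDiff, Nat.reduceEqDiff,
    reduceIte, coeff_Φ_eq_zero A 2 194 hA (by omega), coeff_Φ_eq_zero A 2 188 hA (by omega), coeff_Φ_eq_zero A 2 182 hA (by omega), coeff_Φ_eq_zero A 2 176 hA (by omega), coeff_Φ_eq_zero A 2 170 hA (by omega), coeff_Φ_eq_zero B 1 193 hB (by omega), coeff_Φ_eq_zero B 1 187 hB (by omega), coeff_Φ_eq_zero B 1 181 hB (by omega), coeff_Φ_eq_zero B 1 175 hB (by omega), coeff_Φ_eq_zero B 1 169 hB (by omega), coeff_Φ_eq_zero B 1 163 hB (by omega), coeff_Φ_aevalU p₂ 2 (by norm_num), coeff_Φ_aevalU p₁ 51 (by norm_num), coeff_Φ_aevalU p₀ 100 (by norm_num), mul_zero, zero_mul, mul_one, one_mul, add_zero, zero_add] at hc198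
  have hc162 := congrArg (fun q => Polynomial.coeff q 162) h0
  simp only [Polynomial.coeff_add, Polynomial.coeff_mul_X_pow', Polynomial.coeff_C_mul,
    Polynomial.coeff_X_pow, Polynomial.coeff_C, Nat.reduceSub, Nat.reduceLeDiff, Nat.reduceEqDiff,
    reduceIte, coeff_Φ_eq_zero A 2 158 hA (by omega), coeff_Φ_eq_zero A 2 152 hA (by omega), coeff_Φ_eq_zero A 2 146 hA (by omega), coeff_Φ_eq_zero A 2 140 hA (by omega), coeff_Φ_eq_zero A 2 134 hA (by omega), coeff_Φ_eq_zero B 1 157 hB (by omega), coeff_Φ_eq_zero B 1 151 hB (by omega), coeff_Φ_eq_zero B 1 145 hB (by omega), coeff_Φ_eq_zero B 1 139 hB (by omega), coeff_Φ_eq_zero B 1 133 hB (by omega), coeff_Φ_eq_zero B 1 127 hB (by omega), coeff_Φ_aevalU p₁ 15 (by norm_num), coeff_Φ_aevalU p₀ 64 (by norm_num), mul_zero, zero_mul, mul_one, one_mul, add_zero, zero_add] at hc162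
  have hc156 := congrArg (fun q => Polynomial.coeff q 156) h0
  simp only [Polynomial.coeff_add, Polynomial.coeff_mul_X_pow', Polynomial.coeff_C_mul,
    Polynomial.coeff_X_pow, Polynomial.coeff_C, Nat.reduceSub, Nat.reduceLeDiff, Nat.reduceEqDiff,
    reduceIte, coeff_Φ_eq_zero A 2 152 hA (by omega), coeff_Φ_eq_zero A 2 146 hA (by omega), coeff_Φ_eq_zero A 2 140 hA (by omega), coeff_Φ_eq_zero A 2 134 hA (by omega), coeff_Φ_eq_zero A 2 128 hA (by omega), coeff_Φ_eq_zero B 1 151 hB (by omega), coeff_Φ_eq_zero B 1 145 hB (by omega), coeff_Φ_eq_zero B 1 139 hB (by omega), coeff_Φ_eq_zero B 1 133 hB (by omega), coeff_Φ_eq_zero B 1 127 hB (by omega), coeff_Φ_eq_zero B 1 121 hB (by omega), coeff_Φ_aevalU p₁ 9 (by norm_num), coeff_Φ_aevalU p₀ 58 (by norm_num), mul_zero, zero_mul, mul_one, one_mul, add_zero, zero_add] at hc156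
  have hc150 := congrArg (fun q => Polynomial.coeff q 150) h0
  simp only [Polynomial.coeff_add, Polynomial.coeff_mul_X_pow', Polynomial.coeff_C_mul,
    Polynomial.coeff_X_pow, Polynomial.coeff_C, Nat.reduceSub, Nat.reduceLeDiff, Nat.reduceEqDiff,
    reduceIte, coeff_Φ_eq_zero A 2 146 hA (by omega), coeff_Φ_eq_zero A 2 140 hA (by omega), coeff_Φ_eq_zero A 2 134 hA (by omega), coeff_Φ_eq_zero A 2 128 hA (by omega), coeff_Φ_eq_zero A 2 122 hA (by omega), coeff_Φ_eq_zero B 1 145 hB (by omega), coeff_Φ_eq_zero B 1 139 hB (by omega), coeff_Φ_eq_zero B 1 133 hB (by omega), coeff_Φ_eq_zero B 1 127 hB (by omega), coeff_Φ_eq_zero B 1 121 hB (by omega), coeff_Φ_eq_zero B 1 115 hB (by omega), coeff_Φ_aevalU p₁ 3 (by norm_num), coeff_Φ_aevalU p₀ 52 (by norm_num), mul_zero, zero_mul, mul_one, one_mul, add_zero, zero_add] at hc150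
  have hc120 := congrArg (fun q => Polynomial.coeff q 120) h0
  simp only [Polynomial.coeff_add, Polynomial.coeff_mul_X_pow', Polynomial.coeff_C_mul,
    Polynomial.coeff_X_pow, Polynomial.coeff_C, Nat.reduceSub, Nat.reduceLeDiff, Nat.reduceEqDiff,
    reduceIte, coeff_Φ_eq_zero A 2 116 hA (by omega), coeff_Φ_eq_zero A 2 110 hA (by omega), coeff_Φ_eq_zero A 2 104 hA (by omega), coeff_Φ_eq_zero A 2 92 hA (by omega), coeff_Φ_eq_zero B 1 115 hB (by omega), coeff_Φ_eq_zero B 1 109 hB (by omega), coeff_Φ_eq_zero B 1 103 hB (by omega), coeff_Φ_eq_zero B 1 97 hB (by omega), coeff_Φ_eq_zero B 1 91 hB (by omega), coeff_Φ_eq_zero B 1 85 hB (by omega), coeff_Φ_aevalU p₀ 22 (by norm_num), mul_zero, zero_mul, mul_one, one_mul, add_zero, zero_add] at hc120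
  have hc114 := congrArg (fun q => Polynomial.coeff q 114) h0
  simp only [Polynomial.coeff_add, Polynomial.coeff_mul_X_pow', Polynomial.coeff_C_mul,
    Polynomial.coeff_X_pow, Polynomial.coeff_C, Nat.reduceSub, Nat.reduceLeDiff, Nat.reduceEqDiff,
    reduceIte, coeff_Φ_eq_zero A 2 110 hA (by omega), coeff_Φ_eq_zero A 2 104 hA (by omega), coeff_Φ_eq_zero A 2 92 hA (by omega), coeff_Φ_eq_zero A 2 86 hA (by omega), coeff_Φ_eq_zero B 1 109 hB (by omega), coeff_Φ_eq_zero B 1 103 hB (by omega), coeff_Φ_eq_zero B 1 97 hB (by omega), coeff_Φ_eq_zero B 1 91 hB (by omega), coeff_Φ_eq_zero B 1 85 hB (by omega), coeff_Φ_eq_zero B 1 79 hB (by omega), coeff_Φ_aevalU p₀ 16 (by norm_num), mul_zero, zero_mul, mul_one, one_mul, add_zero, zero_add] at hc114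
  have hc108 := congrArg (fun q => Polynomial.coeff q 108) h0
  simp only [Polynomial.coeff_add, Polynomial.coeff_mul_X_pow', Polynomial.coeff_C_mul,
    Polynomial.coeff_X_pow, Polynomial.coeff_C, Nat.reduceSub, Nat.reduceLeDiff, Nat.reduceEqDiff,
    reduceIte, coeff_Φ_eq_zero A 2 104 hA (by omega), coeff_Φ_eq_zero A 2 92 hA (by omega), coeff_Φ_eq_zero A 2 86 hA (by omega), coeff_Φ_eq_zero A 2 80 hA (by omega), coeff_Φ_eq_zero B 1 103 hB (by omega), coeff_Φ_eq_zero B 1 97 hB (by omega), coeff_Φ_eq_zero B 1 91 hB (by omega), coeff_Φ_eq_zero B 1 85 hB (by omega), coeff_Φ_eq_zero B 1 79 hB (by omega), coeff_Φ_eq_zero B 1 73 hB (by omega), coeff_Φ_aevalU p₀ 10 (by norm_num), mul_zero, zero_mul, mul_one, one_mul, add_zero, zero_add] at hc108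
  have hc102 := congrArg (fun q => Polynomial.coeff q 102) h0
  simp only [Polynomial.coeff_add, Polynomial.coeff_mul_X_pow', Polynomial.coeff_C_mul,
    Polynomial.coeff_X_pow, Polynomial.coeff_C, Nat.reduceSub, Nat.reduceLeDiff, Nat.reduceEqDiff,
    reduceIte, coeff_Φ_eq_zero A 2 92 hA (by omega), coeff_Φ_eq_zero A 2 86 hA (by omega), coeff_Φ_eq_zero A 2 80 hA (by omega), coeff_Φ_eq_zero A 2 74 hA (by omega), coeff_Φ_eq_zero B 1 97 hB (by omega), coeff_Φ_eq_zero B 1 91 hB (by omega), coeff_Φ_eq_zero B 1 85 hB (by omega), coeff_Φ_eq_zero B 1 79 hB (by omega), coeff_Φ_eq_zero B 1 73 hB (by omega), coeff_Φ_eq_zero B 1 67 hB (by omega), coeff_Φ_aevalU p₀ 4 (by norm_num), mul_zero, zero_mul, mul_one, one_mul, add_zero, zero_add] at hc102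
  have hc72 := congrArg (fun q => Polynomial.coeff q 72) h0
  simp only [Polynomial.coeff_add, Polynomial.coeff_mul_X_pow', Polynomial.coeff_C_mul,
    Polynomial.coeff_X_pow, Polynomial.coeff_C, Nat.reduceSub, Nat.reduceLeDiff, Nat.reduceEqDiff,
    reduceIte, coeff_Φ_eq_zero A 2 68 hA (by omega), coeff_Φ_eq_zero A 2 62 hA (by omega), coeff_Φ_eq_zero A 2 44 hA (by omega), coeff_Φ_eq_zero B 1 67 hB (by omega), coeff_Φ_eq_zero B 1 61 hB (by omega), coeff_Φ_eq_zero B 1 55 hB (by omega), coeff_Φ_eq_zero B 1 43 hB (by omega), coeff_Φ_eq_zero B 1 37 hB (by omega), mul_zero, zero_mul, mul_one, one_mul, add_zero, zero_add] at hc72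
  have hc66 := congrArg (fun q => Polynomial.coeff q 66) h0
  simp only [Polynomial.coeff_add, Polynomial.coeff_mul_X_pow', Polynomial.coeff_C_mul,
    Polynomial.coeff_X_pow, Polynomial.coeff_C, Nat.reduceSub, Nat.reduceLeDiff, Nat.reduceEqDiff,
    reduceIte, coeff_Φ_eq_zero A 2 62 hA (by omega), coeff_Φ_eq_zero A 2 44 hA (by omega), coeff_Φ_eq_zero A 2 38 hA (by omega), coeff_Φ_eq_zero B 1 61 hB (by omega), coeff_Φ_eq_zero B 1 55 hB (by omega), coeff_Φ_eq_zero B 1 43 hB (by omega), coeff_Φ_eq_zero B 1 37 hB (by omega), coeff_Φ_eq_zero B 1 31 hB (by omega), mul_zero, zero_mul, mul_one, one_mul, add_zero, zero_add] at hc66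
  have E1 : 1 * n₁ + 1 * t₁ = 0 := by linarith [hc246]
  have E2 : 1 * n₃ + 3 * n₁ + 1 * t₃ + 2 * t₁ + 2 * t₁ * n₁ = 0 := by linarith [hc204]
  have E3 : 1 * n₂ + 1 * t₂ + 1 * t₁ * n₁ = 0 := by linarith [hc198]
  have E4 : 1 * n₅ + 3 * n₃ + 3 * n₁ + 1 * t₅ + 1 * t₃ + 1 * t₃ * n₁ + 1 * t₂ * n₁ + 1 * t₁ + 1 * t₁ * n₃ + 1 * t₁ * n₂ + 4 * t₁ * n₁ = 0 := by linarith [hc162]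
  have E5 : 1 * n₅ + 3 * n₂ + 1 * t₅ + 1 * t₃ * n₁ + 1 * t₂ + 1 * t₂ * n₁ + 1 * t₁ * n₃ + 1 * t₁ * n₂ + 2 * t₁ * n₁ = 0 := by linarith [hc156]
  have E6 : 1 * n₄ + 1 * t₄ + 1 * t₂ * n₁ + 1 * t₁ * n₂ = 0 := by linarith [hc150]
  have E7 : 3 * n₃ + (-3) * n₂ + 1 * n₁ + (-1) * t₅ * n₁ + 1 * t₄ * n₁ + (-1) * t₃ * n₃ + 1 * t₃ * n₂ + 1 * t₂ * n₃ + (-2) * t₂ * n₂ + (-1) * t₁ * n₅ + 1 * t₁ * n₄ + 1 * t₁ * n₁ = 0 := by linarith [hc120, hc114]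
  have E8 : 3 * n₅ + (-3) * n₄ + 3 * n₂ + 1 * t₅ * n₁ + (-1) * t₄ * n₁ + 1 * t₃ * n₃ + (-1) * t₃ * n₂ + 1 * t₃ * n₁ + (-1) * t₂ * n₃ + 2 * t₂ * n₂ + 1 * t₁ * n₅ + (-1) * t₁ * n₄ + 2 * t₁ * n₃ + 1 * t₁ * n₁ = 0 := by linarith [hc114, hc108]
  have E9 : 3 * n₄ + 1 * t₅ * n₁ + 1 * t₃ * n₂ + 1 * t₂ * n₃ + (-1) * t₂ * n₂ + 1 * t₂ * n₁ + 1 * t₁ * n₅ + 2 * t₁ * n₂ = 0 := by linarith [hc108, hc102]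
  have E10 : 3 * n₅ + (-3) * n₄ + 1 * n₂ + 1 * t₃ * n₃ + (-1) * t₃ * n₂ + (-1) * t₂ * n₃ + 2 * t₂ * n₂ + 2 * t₁ * n₅ + (-2) * t₁ * n₄ + 1 * t₁ * n₃ = 0 := by linarith [hc72, hc66]
  exact key_endgame t₁ t₂ t₃ t₄ t₅ n₁ n₂ n₃ n₄ n₅ E1 E2 E3 E4 E5 E6 E7 E8 E9 E10
end

section
/- Suppose integers a, b_1, b_2^0, b_2^1, n_1, n_2^0, n_2^1, n_3^0, n_3^1 satisfy the polynomial identity (T + 2U + a(U+V))·(T + U)^2·(T^2 + b_1(U+V)(T+U) + b_2^0((U)^2+(V)^2) + b_2^1 UV evaluated at T+U)·S_3(T,U,V) ≡ a monic polynomial of degree 6 in T modulo the ideal (R^4(U,V), U^5) of ℤ[T,U,V], following the uniform splitting type (3;1,2,3;2,1,0) setup; then (a,b_1,b_2^0,b_2^1,n_1,n_2^0,n_2^1,n_3^0,n_3^1) equals (0,0,0,0,0,0,0,0,0), (0,−1,0,0,1,1,1,1,1), or (−2,0,0,0,2,4,4,8,8). -/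
open MvPolynomial

lemma fs3_eq (i j k i' j' k' : ℕ) :
    (Finsupp.single (0 : Fin 3) i + Finsupp.single 1 j + Finsupp.single 2 k =
      Finsupp.single (0 : Fin 3) i' + Finsupp.single 1 j' + Finsupp.single 2 k') ↔
    (i' = i ∧ j' = j ∧ k' = k) := by
  constructor
  · intro h
    have h0 := DFunLike.congr_fun h (0 : Fin 3)
    have h1 := DFunLike.congr_fun h (1 : Fin 3)
    have h2 := DFunLike.congr_fun h (2 : Fin 3)
    simp [Finsupp.single_apply] at h0 h1 h2
    exact ⟨h0.symm, h1.symm, h2.symm⟩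
  · rintro ⟨rfl, rfl, rfl⟩; rfl

lemma coeff_CTUV (c : ℤ) (i j k i' j' k' : ℕ) :
    coeff (Finsupp.single (0 : Fin 3) i' + Finsupp.single 1 j' + Finsupp.single 2 k')
      (C c * (T ^ i * U ^ j * V ^ k)) = if i' = i ∧ j' = j ∧ k' = k then c else 0 := by
  rw [T, U, V, X_pow_eq_monomial, X_pow_eq_monomial, X_pow_eq_monomial, monomial_mul,
    monomial_mul, C_mul_monomial, coeff_monomial]
  simp only [fs3_eq, mul_one]

lemma coeff_mul_U5 (w : MP) (i' j' k' : ℕ) (hj : j' < 5) :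
    coeff (Finsupp.single (0 : Fin 3) i' + Finsupp.single 1 j' + Finsupp.single 2 k')
      (w * U ^ 5) = 0 := by
  rw [U, X_pow_eq_monomial, coeff_mul_monomial', if_neg]
  intro hle
  have h5 := Finsupp.single_le_iff.mp hle
  simp [Finsupp.single_apply] at h5
  omega

lemma coeff_mul_V5 (w : MP) (i' j' k' : ℕ) (hk : k' < 5) :
    coeff (Finsupp.single (0 : Fin 3) i' + Finsupp.single 1 j' + Finsupp.single 2 k')
      (w * V ^ 5) = 0 := by
  rw [V, X_pow_eq_monomial, coeff_mul_monomial', if_neg]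
  intro hle
  have h5 := Finsupp.single_le_iff.mp hle
  simp [Finsupp.single_apply] at h5
  omega

lemma coeff_UVS (x : Polynomial ℤ) (i i' j' k' : ℕ) (h2 : 2 ≤ k') :
    coeff (Finsupp.single (0 : Fin 3) i' + Finsupp.single 1 j' + Finsupp.single 2 k')
      ((U - V) * (Polynomial.aeval U x * T ^ i)) = 0 := by
  induction x using Polynomial.induction_on' with
  | add p q hp hq =>
    rw [map_add, add_mul, mul_add, coeff_add, hp, hq, add_zero]
  | monomial n c =>
    have e1 : (U - V) * (Polynomial.aeval U (Polynomial.monomial n c) * T ^ i) =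
        C c * (T ^ i * U ^ (n + 1) * V ^ 0) - C c * (T ^ i * U ^ n * V ^ 1) := by
      rw [Polynomial.aeval_monomial, ← MvPolynomial.algebraMap_eq]
      ring
    rw [e1, coeff_sub, coeff_CTUV, coeff_CTUV, if_neg (by omega), if_neg (by omega), sub_zero]

lemma coeff_S (q : Fin 6 → Polynomial ℤ) (i' j' k' : ℕ) (h2 : 2 ≤ k') :
    coeff (Finsupp.single (0 : Fin 3) i' + Finsupp.single 1 j' + Finsupp.single 2 k')
      ((U - V) * (T ^ 6 + ∑ i : Fin 6, Polynomial.aeval U (q i) * T ^ (i : ℕ))) = 0 := by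
  have e6 : ((U - V) * T ^ 6 : MP) = (U - V) * (Polynomial.aeval U (1 : Polynomial ℤ) * T ^ 6) := by
    simp
  rw [mul_add, coeff_add, Finset.mul_sum, coeff_sum, e6, coeff_UVS _ _ _ _ _ h2,
    Finset.sum_eq_zero, add_zero]
  intro i _
  exact coeff_UVS _ _ _ _ _ h2

lemma hR4 : (U - V) * R 4 = U ^ 5 - V ^ 5 := by
  simp only [_root_.R, Finset.sum_range_succ, Finset.sum_range_zero]
  norm_num
  ring

set_option maxHeartbeats 4000000

/-- Chern polynomial equation for a uniform 6-bundle over `ℙ⁴` with splitting type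
`(3;1,2,3;2,1,0)`: if the product
`S₁(T+2U,U,V)·S₂(T+U,U,V)·S₃(T,U,V)` is congruent, modulo the ideal `(R⁴(U,V), U⁵)` of
`ℤ[T,U,V]`, to a monic polynomial of degree 6 in `T` with coefficients polynomials in `U`,
then the coefficient tuple is one of the three listed solutions. -/
theorem uniform_rank6_splitting_123 (a b₁ b₂ b₃ n₁ n₂ n₃ n₄ n₅ : ℤ)
    (h : ∃ q : Fin 6 → Polynomial ℤ,
      lin a (T + C 2 * U) * quad b₁ b₂ b₃ (T + U) * cub n₁ n₂ n₃ n₄ n₅ T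
          - (T ^ 6 + ∑ i : Fin 6, Polynomial.aeval U (q i) * T ^ (i : ℕ))
        ∈ Ideal.span {R 4, U ^ 5}) :
    (a, b₁, b₂, b₃, n₁, n₂, n₃, n₄, n₅) = (0, 0, 0, 0, 0, 0, 0, 0, 0) ∨
    (a, b₁, b₂, b₃, n₁, n₂, n₃, n₄, n₅) = (0, -1, 0, 0, 1, 1, 1, 1, 1) ∨
    (a, b₁, b₂, b₃, n₁, n₂, n₃, n₄, n₅) = (-2, 0, 0, 0, 2, 4, 4, 8, 8) := by
  obtain ⟨q, hq⟩ := h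
  rw [Ideal.mem_span_pair] at hq
  obtain ⟨p, r, hpr⟩ := hq
  have hR : (U - V) * R 4 = U ^ 5 - V ^ 5 := by
    simp only [_root_.R, Finset.sum_range_succ, Finset.sum_range_zero]
    norm_num
    ring
  have key : (U - V) * (lin a (T + C 2 * U) * quad b₁ b₂ b₃ (T + U) * cub n₁ n₂ n₃ n₄ n₅ T)
      = (U - V) * (T ^ 6 + ∑ i : Fin 6, Polynomial.aeval U (q i) * T ^ (i : ℕ))
        + (p + (U - V) * r) * U ^ 5 + -p * V ^ 5 := by
    linear_combination (V - U) * hpr + p * hR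
  have hexp : (U - V) * (lin a (T + C 2 * U) * quad b₁ b₂ b₃ (T + U) * cub n₁ n₂ n₃ n₄ n₅ T)
      = C ((-1) * a * b₂ * n₄ : ℤ) * (T ^ 0 * U ^ 0 * V ^ 7) +
      C ((-2) * b₂ * n₄ + (-1) * a * b₃ * n₄ + (-1) * a * b₂ * n₅ + (-1) * a * b₁ * n₄ : ℤ) * (T ^ 0 * U ^ 1 * V ^ 6) +
      C ((-2) * b₃ * n₄ + (-2) * b₂ * n₅ + 2 * b₂ * n₄ + (-2) * b₁ * n₄ + (-1) * a * n₄ + (-1) * a * b₃ * n₅ + (-1) * a * b₂ * n₅ + (-1) * a * b₁ * n₅ + (-1) * a * b₁ * n₄ : ℤ) * (T ^ 0 * U ^ 2 * V ^ 5) +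
      C ((-2) * n₄ + (-2) * b₃ * n₅ + 2 * b₃ * n₄ + (-2) * b₂ * n₄ + (-2) * b₁ * n₅ + (-1) * a * n₅ + (-1) * a * b₃ * n₅ + a * b₃ * n₄ + (-1) * a * b₂ * n₄ + (-2) * a * b₁ * n₅ + a * b₁ * n₄ : ℤ) * (T ^ 0 * U ^ 3 * V ^ 4) +
      C ((-2) * n₅ + 2 * n₄ + (-2) * b₁ * n₅ + 2 * b₁ * n₄ + (-1) * a * n₅ + a * n₄ + a * b₃ * n₅ + (-1) * a * b₃ * n₄ + a * b₂ * n₄ : ℤ) * (T ^ 0 * U ^ 4 * V ^ 3) +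
      C (2 * b₃ * n₅ + (-2) * b₃ * n₄ + 2 * b₂ * n₄ + 2 * b₁ * n₅ + (-2) * b₁ * n₄ + a * n₅ + (-1) * a * n₄ + a * b₃ * n₅ + a * b₂ * n₅ + 2 * a * b₁ * n₅ + (-1) * a * b₁ * n₄ : ℤ) * (T ^ 0 * U ^ 5 * V ^ 2) +
      C (2 * n₅ + (-2) * n₄ + 2 * b₃ * n₄ + 2 * b₂ * n₅ + (-2) * b₂ * n₄ + 2 * b₁ * n₅ + a * n₅ + a * b₃ * n₄ + a * b₂ * n₅ + a * b₁ * n₅ + a * b₁ * n₄ : ℤ) * (T ^ 0 * U ^ 6 * V ^ 1) +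
      C (2 * n₄ + 2 * b₂ * n₄ + 2 * b₁ * n₄ + a * n₄ + a * b₂ * n₄ + a * b₁ * n₄ : ℤ) * (T ^ 0 * U ^ 7 * V ^ 0) +
      C ((-1) * b₂ * n₄ + (-1) * a * b₂ * n₂ + (-1) * a * b₁ * n₄ : ℤ) * (T ^ 1 * U ^ 0 * V ^ 6) +
      C ((-1) * b₃ * n₄ + (-1) * b₂ * n₅ + b₂ * n₄ + (-2) * b₂ * n₂ + (-3) * b₁ * n₄ + (-2) * a * n₄ + (-1) * a * b₃ * n₂ + (-1) * a * b₂ * n₃ + (-1) * a * b₁ * n₅ + (-1) * a * b₁ * n₄ + (-1) * a * b₁ * n₂ : ℤ) * (T ^ 1 * U ^ 1 * V ^ 5) +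
      C ((-5) * n₄ + (-1) * b₃ * n₅ + b₃ * n₄ + (-2) * b₃ * n₂ + (-1) * b₂ * n₄ + (-2) * b₂ * n₃ + 2 * b₂ * n₂ + (-3) * b₁ * n₅ + (-2) * b₁ * n₂ + (-2) * a * n₅ + (-1) * a * n₂ + (-1) * a * b₃ * n₃ + (-1) * a * b₂ * n₂ + (-2) * a * b₁ * n₅ + a * b₁ * n₄ + (-1) * a * b₁ * n₃ + (-1) * a * b₁ * n₂ : ℤ) * (T ^ 1 * U ^ 2 * V ^ 4) +
      C ((-5) * n₅ + 5 * n₄ + (-2) * n₂ + (-2) * b₃ * n₃ + 2 * b₃ * n₂ + 2 * b₂ * n₃ + (-4) * b₂ * n₂ + (-3) * b₁ * n₅ + 3 * b₁ * n₄ + (-2) * b₁ * n₃ + (-2) * a * n₅ + 2 * a * n₄ + (-1) * a * n₃ + (-1) * a * b₁ * n₃ : ℤ) * (T ^ 1 * U ^ 3 * V ^ 3) +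
      C ((-2) * n₃ + 2 * n₂ + b₃ * n₅ + (-1) * b₃ * n₄ + 2 * b₃ * n₃ + (-2) * b₃ * n₂ + b₂ * n₄ + (-2) * b₂ * n₃ + 4 * b₂ * n₂ + 3 * b₁ * n₅ + (-3) * b₁ * n₄ + 2 * a * n₅ + (-2) * a * n₄ + a * b₃ * n₃ + a * b₂ * n₂ + 2 * a * b₁ * n₅ + (-1) * a * b₁ * n₄ + a * b₁ * n₃ : ℤ) * (T ^ 1 * U ^ 4 * V ^ 2) +
      C (5 * n₅ + (-5) * n₄ + 2 * n₃ + (-2) * n₂ + b₃ * n₄ + 2 * b₃ * n₂ + b₂ * n₅ + (-1) * b₂ * n₄ + 2 * b₂ * n₃ + (-2) * b₂ * n₂ + 3 * b₁ * n₅ + 2 * b₁ * n₃ + 2 * a * n₅ + a * n₃ + a * b₃ * n₂ + a * b₂ * n₃ + a * b₁ * n₅ + a * b₁ * n₄ + a * b₁ * n₃ + a * b₁ * n₂ : ℤ) * (T ^ 1 * U ^ 5 * V ^ 1) +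
      C (5 * n₄ + 2 * n₂ + b₂ * n₄ + 2 * b₂ * n₂ + 3 * b₁ * n₄ + 2 * b₁ * n₂ + 2 * a * n₄ + a * n₂ + a * b₂ * n₂ + a * b₁ * n₄ + a * b₁ * n₂ : ℤ) * (T ^ 1 * U ^ 6 * V ^ 0) +
      C ((-1) * b₂ * n₂ + (-1) * b₁ * n₄ + (-1) * a * n₄ + (-1) * a * b₂ * n₁ + (-1) * a * b₁ * n₂ : ℤ) * (T ^ 2 * U ^ 0 * V ^ 5) +
      C ((-4) * n₄ + (-1) * b₃ * n₂ + (-1) * b₂ * n₃ + b₂ * n₂ + (-2) * b₂ * n₁ + (-1) * b₁ * n₅ + (-3) * b₁ * n₂ + (-1) * a * n₅ + (-2) * a * n₂ + (-1) * a * b₃ * n₁ + (-1) * a * b₂ * n₁ + (-1) * a * b₁ * n₃ + (-1) * a * b₁ * n₂ + (-1) * a * b₁ * n₁ : ℤ) * (T ^ 2 * U ^ 1 * V ^ 4) +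
      C ((-4) * n₅ + 4 * n₄ + (-5) * n₂ + (-1) * b₃ * n₃ + b₃ * n₂ + (-2) * b₃ * n₁ + b₂ * n₃ + (-2) * b₂ * n₂ + (-1) * b₁ * n₅ + b₁ * n₄ + (-3) * b₁ * n₃ + (-2) * b₁ * n₁ + (-1) * a * n₅ + a * n₄ + (-2) * a * n₃ + (-1) * a * n₁ + (-1) * a * b₃ * n₁ + (-1) * a * b₁ * n₃ + (-2) * a * b₁ * n₁ : ℤ) * (T ^ 2 * U ^ 2 * V ^ 3) +
      C ((-5) * n₃ + 5 * n₂ + (-2) * n₁ + b₃ * n₃ + (-1) * b₃ * n₂ + (-1) * b₂ * n₃ + 2 * b₂ * n₂ + b₁ * n₅ + (-1) * b₁ * n₄ + (-2) * b₁ * n₁ + a * n₅ + (-1) * a * n₄ + (-1) * a * n₁ + a * b₃ * n₁ + a * b₁ * n₃ : ℤ) * (T ^ 2 * U ^ 3 * V ^ 2) +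
      C (4 * n₅ + (-4) * n₄ + 5 * n₃ + (-5) * n₂ + b₃ * n₂ + 2 * b₃ * n₁ + b₂ * n₃ + (-1) * b₂ * n₂ + b₁ * n₅ + 3 * b₁ * n₃ + 2 * b₁ * n₁ + a * n₅ + 2 * a * n₃ + a * n₁ + a * b₃ * n₁ + a * b₂ * n₁ + a * b₁ * n₃ + a * b₁ * n₂ + 2 * a * b₁ * n₁ : ℤ) * (T ^ 2 * U ^ 4 * V ^ 1) +
      C (4 * n₄ + 5 * n₂ + 2 * n₁ + b₂ * n₂ + 2 * b₂ * n₁ + b₁ * n₄ + 3 * b₁ * n₂ + 2 * b₁ * n₁ + a * n₄ + 2 * a * n₂ + a * n₁ + a * b₂ * n₁ + a * b₁ * n₂ + a * b₁ * n₁ : ℤ) * (T ^ 2 * U ^ 5 * V ^ 0) +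
      C ((-1) * n₄ + (-1) * b₂ * n₁ + (-1) * b₁ * n₂ + (-1) * a * n₂ + (-1) * a * b₂ + (-1) * a * b₁ * n₁ : ℤ) * (T ^ 3 * U ^ 0 * V ^ 4) +
      C ((-1) * n₅ + n₄ + (-4) * n₂ + (-1) * b₃ * n₁ + (-2) * b₂ + (-1) * b₁ * n₃ + (-3) * b₁ * n₁ + (-1) * a * n₃ + (-2) * a * n₁ + (-1) * a * b₃ + (-1) * a * b₁ + (-2) * a * b₁ * n₁ : ℤ) * (T ^ 3 * U ^ 1 * V ^ 3) +
      C ((-4) * n₃ + 4 * n₂ + (-5) * n₁ + (-2) * b₃ + 2 * b₂ + (-2) * b₁ + (-3) * b₁ * n₁ + (-1) * a + (-2) * a * n₁ + (-1) * a * b₁ : ℤ) * (T ^ 3 * U ^ 2 * V ^ 2) +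
      C ((-2) + n₅ + (-1) * n₄ + 4 * n₃ + (-4) * n₂ + 2 * b₃ + b₃ * n₁ + (-2) * b₂ + b₁ * n₃ + 3 * b₁ * n₁ + a * n₃ + 2 * a * n₁ + a * b₃ + a * b₁ + 2 * a * b₁ * n₁ : ℤ) * (T ^ 3 * U ^ 3 * V ^ 1) +
      C (2 + n₄ + 4 * n₂ + 5 * n₁ + 2 * b₂ + b₂ * n₁ + 2 * b₁ + b₁ * n₂ + 3 * b₁ * n₁ + a + a * n₂ + 2 * a * n₁ + a * b₂ + a * b₁ + a * b₁ * n₁ : ℤ) * (T ^ 3 * U ^ 4 * V ^ 0) +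
      C ((-1) * n₂ + (-1) * b₂ + (-1) * b₁ * n₁ + (-1) * a * n₁ + (-1) * a * b₁ : ℤ) * (T ^ 4 * U ^ 0 * V ^ 3) +
      C ((-1) * n₃ + n₂ + (-4) * n₁ + (-1) * b₃ + b₂ + (-3) * b₁ + (-1) * b₁ * n₁ + (-2) * a + (-1) * a * n₁ + (-1) * a * b₁ : ℤ) * (T ^ 4 * U ^ 1 * V ^ 2) +
      C ((-5) + n₃ + (-1) * n₂ + b₃ + (-1) * b₂ + b₁ * n₁ + a * n₁ + a * b₁ : ℤ) * (T ^ 4 * U ^ 2 * V ^ 1) +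
      C (5 + n₂ + 4 * n₁ + b₂ + 3 * b₁ + b₁ * n₁ + 2 * a + a * n₁ + a * b₁ : ℤ) * (T ^ 4 * U ^ 3 * V ^ 0) +
      C ((-1) * n₁ + (-1) * b₁ + (-1) * a : ℤ) * (T ^ 5 * U ^ 0 * V ^ 2) +
      C ((-4) : ℤ) * (T ^ 5 * U ^ 1 * V ^ 1) +
      C (4 + n₁ + b₁ + a : ℤ) * (T ^ 5 * U ^ 2 * V ^ 0) +
      C ((-1) : ℤ) * (T ^ 6 * U ^ 0 * V ^ 1) +
      C (1 : ℤ) * (T ^ 6 * U ^ 1 * V ^ 0) := by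
    simp only [lin, quad, cub, map_add, map_mul, map_pow, map_neg, map_ofNat, C_1, C_0]
    ring
  have E034 : ((-2) * n₄ + (-2) * b₃ * n₅ + 2 * b₃ * n₄ + (-2) * b₂ * n₄ + (-2) * b₁ * n₅ + (-1) * a * n₅ + (-1) * a * b₃ * n₅ + a * b₃ * n₄ + (-1) * a * b₂ * n₄ + (-2) * a * b₁ * n₅ + a * b₁ * n₄ : ℤ) = 0 := by
    have h0 := congrArg (coeff (Finsupp.single (0 : Fin 3) 0 + Finsupp.single 1 3 + Finsupp.single 2 4)) key
    rw [coeff_add, coeff_add, coeff_S q _ _ _ (by norm_num),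
      coeff_mul_U5 _ _ _ _ (by norm_num), coeff_mul_V5 _ _ _ _ (by norm_num),
      add_zero, add_zero, hexp] at h0
    simp only [coeff_add, coeff_CTUV] at h0
    norm_num at h0
    linear_combination h0
  have E043 : ((-2) * n₅ + 2 * n₄ + (-2) * b₁ * n₅ + 2 * b₁ * n₄ + (-1) * a * n₅ + a * n₄ + a * b₃ * n₅ + (-1) * a * b₃ * n₄ + a * b₂ * n₄ : ℤ) = 0 := by
    have h0 := congrArg (coeff (Finsupp.single (0 : Fin 3) 0 + Finsupp.single 1 4 + Finsupp.single 2 3)) key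
    rw [coeff_add, coeff_add, coeff_S q _ _ _ (by norm_num),
      coeff_mul_U5 _ _ _ _ (by norm_num), coeff_mul_V5 _ _ _ _ (by norm_num),
      add_zero, add_zero, hexp] at h0
    simp only [coeff_add, coeff_CTUV] at h0
    norm_num at h0
    linear_combination h0
  have E124 : ((-5) * n₄ + (-1) * b₃ * n₅ + b₃ * n₄ + (-2) * b₃ * n₂ + (-1) * b₂ * n₄ + (-2) * b₂ * n₃ + 2 * b₂ * n₂ + (-3) * b₁ * n₅ + (-2) * b₁ * n₂ + (-2) * a * n₅ + (-1) * a * n₂ + (-1) * a * b₃ * n₃ + (-1) * a * b₂ * n₂ + (-2) * a * b₁ * n₅ + a * b₁ * n₄ + (-1) * a * b₁ * n₃ + (-1) * a * b₁ * n₂ : ℤ) = 0 := by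
    have h0 := congrArg (coeff (Finsupp.single (0 : Fin 3) 1 + Finsupp.single 1 2 + Finsupp.single 2 4)) key
    rw [coeff_add, coeff_add, coeff_S q _ _ _ (by norm_num),
      coeff_mul_U5 _ _ _ _ (by norm_num), coeff_mul_V5 _ _ _ _ (by norm_num),
      add_zero, add_zero, hexp] at h0
    simp only [coeff_add, coeff_CTUV] at h0
    norm_num at h0
    linear_combination h0
  have E133 : ((-5) * n₅ + 5 * n₄ + (-2) * n₂ + (-2) * b₃ * n₃ + 2 * b₃ * n₂ + 2 * b₂ * n₃ + (-4) * b₂ * n₂ + (-3) * b₁ * n₅ + 3 * b₁ * n₄ + (-2) * b₁ * n₃ + (-2) * a * n₅ + 2 * a * n₄ + (-1) * a * n₃ + (-1) * a * b₁ * n₃ : ℤ) = 0 := by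
    have h0 := congrArg (coeff (Finsupp.single (0 : Fin 3) 1 + Finsupp.single 1 3 + Finsupp.single 2 3)) key
    rw [coeff_add, coeff_add, coeff_S q _ _ _ (by norm_num),
      coeff_mul_U5 _ _ _ _ (by norm_num), coeff_mul_V5 _ _ _ _ (by norm_num),
      add_zero, add_zero, hexp] at h0
    simp only [coeff_add, coeff_CTUV] at h0
    norm_num at h0
    linear_combination h0
  have E142 : ((-2) * n₃ + 2 * n₂ + b₃ * n₅ + (-1) * b₃ * n₄ + 2 * b₃ * n₃ + (-2) * b₃ * n₂ + b₂ * n₄ + (-2) * b₂ * n₃ + 4 * b₂ * n₂ + 3 * b₁ * n₅ + (-3) * b₁ * n₄ + 2 * a * n₅ + (-2) * a * n₄ + a * b₃ * n₃ + a * b₂ * n₂ + 2 * a * b₁ * n₅ + (-1) * a * b₁ * n₄ + a * b₁ * n₃ : ℤ) = 0 := by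
    have h0 := congrArg (coeff (Finsupp.single (0 : Fin 3) 1 + Finsupp.single 1 4 + Finsupp.single 2 2)) key
    rw [coeff_add, coeff_add, coeff_S q _ _ _ (by norm_num),
      coeff_mul_U5 _ _ _ _ (by norm_num), coeff_mul_V5 _ _ _ _ (by norm_num),
      add_zero, add_zero, hexp] at h0
    simp only [coeff_add, coeff_CTUV] at h0
    norm_num at h0
    linear_combination h0
  have E214 : ((-4) * n₄ + (-1) * b₃ * n₂ + (-1) * b₂ * n₃ + b₂ * n₂ + (-2) * b₂ * n₁ + (-1) * b₁ * n₅ + (-3) * b₁ * n₂ + (-1) * a * n₅ + (-2) * a * n₂ + (-1) * a * b₃ * n₁ + (-1) * a * b₂ * n₁ + (-1) * a * b₁ * n₃ + (-1) * a * b₁ * n₂ + (-1) * a * b₁ * n₁ : ℤ) = 0 := by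
    have h0 := congrArg (coeff (Finsupp.single (0 : Fin 3) 2 + Finsupp.single 1 1 + Finsupp.single 2 4)) key
    rw [coeff_add, coeff_add, coeff_S q _ _ _ (by norm_num),
      coeff_mul_U5 _ _ _ _ (by norm_num), coeff_mul_V5 _ _ _ _ (by norm_num),
      add_zero, add_zero, hexp] at h0
    simp only [coeff_add, coeff_CTUV] at h0
    norm_num at h0
    linear_combination h0
  have E223 : ((-4) * n₅ + 4 * n₄ + (-5) * n₂ + (-1) * b₃ * n₃ + b₃ * n₂ + (-2) * b₃ * n₁ + b₂ * n₃ + (-2) * b₂ * n₂ + (-1) * b₁ * n₅ + b₁ * n₄ + (-3) * b₁ * n₃ + (-2) * b₁ * n₁ + (-1) * a * n₅ + a * n₄ + (-2) * a * n₃ + (-1) * a * n₁ + (-1) * a * b₃ * n₁ + (-1) * a * b₁ * n₃ + (-2) * a * b₁ * n₁ : ℤ) = 0 := by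
    have h0 := congrArg (coeff (Finsupp.single (0 : Fin 3) 2 + Finsupp.single 1 2 + Finsupp.single 2 3)) key
    rw [coeff_add, coeff_add, coeff_S q _ _ _ (by norm_num),
      coeff_mul_U5 _ _ _ _ (by norm_num), coeff_mul_V5 _ _ _ _ (by norm_num),
      add_zero, add_zero, hexp] at h0
    simp only [coeff_add, coeff_CTUV] at h0
    norm_num at h0
    linear_combination h0
  have E232 : ((-5) * n₃ + 5 * n₂ + (-2) * n₁ + b₃ * n₃ + (-1) * b₃ * n₂ + (-1) * b₂ * n₃ + 2 * b₂ * n₂ + b₁ * n₅ + (-1) * b₁ * n₄ + (-2) * b₁ * n₁ + a * n₅ + (-1) * a * n₄ + (-1) * a * n₁ + a * b₃ * n₁ + a * b₁ * n₃ : ℤ) = 0 := by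
    have h0 := congrArg (coeff (Finsupp.single (0 : Fin 3) 2 + Finsupp.single 1 3 + Finsupp.single 2 2)) key
    rw [coeff_add, coeff_add, coeff_S q _ _ _ (by norm_num),
      coeff_mul_U5 _ _ _ _ (by norm_num), coeff_mul_V5 _ _ _ _ (by norm_num),
      add_zero, add_zero, hexp] at h0
    simp only [coeff_add, coeff_CTUV] at h0
    norm_num at h0
    linear_combination h0
  have E304 : ((-1) * n₄ + (-1) * b₂ * n₁ + (-1) * b₁ * n₂ + (-1) * a * n₂ + (-1) * a * b₂ + (-1) * a * b₁ * n₁ : ℤ) = 0 := by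
    have h0 := congrArg (coeff (Finsupp.single (0 : Fin 3) 3 + Finsupp.single 1 0 + Finsupp.single 2 4)) key
    rw [coeff_add, coeff_add, coeff_S q _ _ _ (by norm_num),
      coeff_mul_U5 _ _ _ _ (by norm_num), coeff_mul_V5 _ _ _ _ (by norm_num),
      add_zero, add_zero, hexp] at h0
    simp only [coeff_add, coeff_CTUV] at h0
    norm_num at h0
    linear_combination h0
  have E313 : ((-1) * n₅ + n₄ + (-4) * n₂ + (-1) * b₃ * n₁ + (-2) * b₂ + (-1) * b₁ * n₃ + (-3) * b₁ * n₁ + (-1) * a * n₃ + (-2) * a * n₁ + (-1) * a * b₃ + (-1) * a * b₁ + (-2) * a * b₁ * n₁ : ℤ) = 0 := by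
    have h0 := congrArg (coeff (Finsupp.single (0 : Fin 3) 3 + Finsupp.single 1 1 + Finsupp.single 2 3)) key
    rw [coeff_add, coeff_add, coeff_S q _ _ _ (by norm_num),
      coeff_mul_U5 _ _ _ _ (by norm_num), coeff_mul_V5 _ _ _ _ (by norm_num),
      add_zero, add_zero, hexp] at h0
    simp only [coeff_add, coeff_CTUV] at h0
    norm_num at h0
    linear_combination h0
  have E322 : ((-4) * n₃ + 4 * n₂ + (-5) * n₁ + (-2) * b₃ + 2 * b₂ + (-2) * b₁ + (-3) * b₁ * n₁ + (-1) * a + (-2) * a * n₁ + (-1) * a * b₁ : ℤ) = 0 := by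
    have h0 := congrArg (coeff (Finsupp.single (0 : Fin 3) 3 + Finsupp.single 1 2 + Finsupp.single 2 2)) key
    rw [coeff_add, coeff_add, coeff_S q _ _ _ (by norm_num),
      coeff_mul_U5 _ _ _ _ (by norm_num), coeff_mul_V5 _ _ _ _ (by norm_num),
      add_zero, add_zero, hexp] at h0
    simp only [coeff_add, coeff_CTUV] at h0
    norm_num at h0
    linear_combination h0
  have E403 : ((-1) * n₂ + (-1) * b₂ + (-1) * b₁ * n₁ + (-1) * a * n₁ + (-1) * a * b₁ : ℤ) = 0 := by
    have h0 := congrArg (coeff (Finsupp.single (0 : Fin 3) 4 + Finsupp.single 1 0 + Finsupp.single 2 3)) key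
    rw [coeff_add, coeff_add, coeff_S q _ _ _ (by norm_num),
      coeff_mul_U5 _ _ _ _ (by norm_num), coeff_mul_V5 _ _ _ _ (by norm_num),
      add_zero, add_zero, hexp] at h0
    simp only [coeff_add, coeff_CTUV] at h0
    norm_num at h0
    linear_combination h0
  have E412 : ((-1) * n₃ + n₂ + (-4) * n₁ + (-1) * b₃ + b₂ + (-3) * b₁ + (-1) * b₁ * n₁ + (-2) * a + (-1) * a * n₁ + (-1) * a * b₁ : ℤ) = 0 := by
    have h0 := congrArg (coeff (Finsupp.single (0 : Fin 3) 4 + Finsupp.single 1 1 + Finsupp.single 2 2)) key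
    rw [coeff_add, coeff_add, coeff_S q _ _ _ (by norm_num),
      coeff_mul_U5 _ _ _ _ (by norm_num), coeff_mul_V5 _ _ _ _ (by norm_num),
      add_zero, add_zero, hexp] at h0
    simp only [coeff_add, coeff_CTUV] at h0
    norm_num at h0
    linear_combination h0
  have E502 : ((-1) * n₁ + (-1) * b₁ + (-1) * a : ℤ) = 0 := by
    have h0 := congrArg (coeff (Finsupp.single (0 : Fin 3) 5 + Finsupp.single 1 0 + Finsupp.single 2 2)) key
    rw [coeff_add, coeff_add, coeff_S q _ _ _ (by norm_num),
      coeff_mul_U5 _ _ _ _ (by norm_num), coeff_mul_V5 _ _ _ _ (by norm_num),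
      add_zero, add_zero, hexp] at h0
    simp only [coeff_add, coeff_CTUV] at h0
    norm_num at h0
    linear_combination h0
  have hn₁ : n₁ = (-1) * b₁ + (-1) * a := by linear_combination (-1 : ℤ) * E502
  subst hn₁
  have hn₂ : n₂ = (-1) * b₂ + b₁ ^ 2 + a * b₁ + a ^ 2 := by linear_combination (-1 : ℤ) * E403
  subst hn₂
  have hn₄ : n₄ = 2 * b₁ * b₂ + (-1) * b₁ ^ 3 + a * b₂ + (-1) * a * b₁ ^ 2 + (-1) * a ^ 2 * b₁ + (-1) * a ^ 3 := by linear_combination (-1 : ℤ) * E304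
  subst hn₄
  have hn₃ : n₃ = (-1) * b₃ + b₁ + 2 * b₁ ^ 2 + 2 * a + 2 * a * b₁ + 2 * a ^ 2 := by linear_combination (-1 : ℤ) * E412
  subst hn₃
  have hn₅ : n₅ = 2 * b₂ + 2 * b₁ * b₃ + 2 * b₁ * b₂ + (-2) * b₁ ^ 2 + (-3) * b₁ ^ 3 + a * b₃ + a * b₂ + (-3) * a * b₁ + (-3) * a * b₁ ^ 2 + (-4) * a ^ 2 + (-3) * a ^ 2 * b₁ + (-3) * a ^ 3 := by linear_combination (-1 : ℤ) * E313
  subst hn₅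
  have tb2 : (7376021175046869496214000 : ℤ) * b₂ = 0 := by
    linear_combination ((-5527887428854869588677540) + 6487966154760579995491220 * b₃ + 2208981532477121307283360 * b₂ + (-18968270890414826706941860) * b₁ + 16220014602128701389857240 * a : ℤ) * E034 +
      (3318518817200191037707460 + 6487966154760579995491220 * b₃ + 2208981532477121307283360 * b₂ + 7267686704981587798067940 * b₁ + 22296278284419362002941640 * a : ℤ) * E043 +
      (3322595824769211248991060 + (-5840245390883077399966630) * b₃ + (-9559496145382784075138140) * b₂ + 18093639423844602740658090 * b₁ + (-50504952126238435759295460) * a : ℤ) * E124 +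
      ((-20271292087892400411144365) + (-30465980734596779416924205) * b₃ + 33535754827050994999921860 * b₂ + 21862306050825155977375665 * b₁ + 2967305206023542890901275 * b₁ * b₃ + (-12892869352541678341053550) * b₁ * b₂ + 7326970981934457012949350 * b₁ ^ 2 + 53761339190115955964944440 * a + 12854151690321840355440000 * a * b₃ + 7405178944786204023934500 * a * b₂ + 19039986197953863723356600 * a * b₁ + 57658686521380013772077350 * a ^ 2 : ℤ) * E133 +
      (6792240090462407547976350 * b₃ + (-909723734901059619489300) * b₂ + (-7534923628785155409189950) * b₁ + 9620188568534026220935900 * a : ℤ) * E142 +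
      ((-8098367811266205010489640) + (-16799404716086888351548208) * b₃ + 73816237444409820187518688 * b₂ + (-24997304078126797092075736) * b₁ + (-5226956245848117274329980) * b₁ * b₃ + 24349390751056493602820560 * b₁ * b₂ + 12237819777846667303062604 * b₁ ^ 2 + 112007332816021281954338616 * a + 6611779766823539528826440 * a * b₃ + 32084047268165139692825120 * a * b₂ + (-9530200226181481663660880) * a * b₁ + 24033070645572699115682208 * a ^ 2 : ℤ) * E214 +
      (47173413419763856547370360 + 63852166367653398456607300 * b₃ + (-4539328841713950619250350) * b₃ ^ 2 + (-76752823814470798725199770) * b₂ + 5135911294568703598538300 * b₂ * b₃ + 3036690498152576769074800 * b₂ ^ 2 + (-43903793289836441388228915) * b₁ + (-936267929804532697495730) * b₁ * b₃ + 8302420861879540403276660 * b₁ * b₂ + (-23313657412354849749781175) * b₁ ^ 2 + (-121132439159087949364649500) * a + (-31253091848763736541502760) * a * b₃ + 37333058215674024834790120 * a * b₂ + (-45094755841947527269384380) * a * b₁ + (-86502708108484629151134850) * a ^ 2 : ℤ) * E223 +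
      ((-101073578973720971635537612) * b₃ + (-4539328841713950619250350) * b₃ ^ 2 + 105641692838162139912724362 * b₂ + 5135911294568703598538300 * b₂ * b₃ + 3036690498152576769074800 * b₂ ^ 2 + 34861302368973880279254281 * b₁ + (-2783308129876491120875250) * b₁ * b₃ + 14074398490508842201924600 * b₁ * b₂ + 29892570965389055727436781 * b₁ ^ 2 + 87901634985555736650756324 * a + (-17415983761431008206788000) * a * b₃ + 67922647684595259269377600 * a * b₂ + (-15755525974161396249943100) * a * b₁ + 64864270902634447066543162 * a ^ 2 : ℤ) * E232 +
      (242576292721850493678326865 * b₃ + (-33856329741343121533046026) * b₃ ^ 2 + (-279268837687113367707440720) * b₂ + 111131002437028446050022460 * b₂ * b₃ + (-152998944098161262494022216) * b₂ ^ 2 + (-103520910268377255240678573) * b₁ + 17568162076545200714970021 * b₁ * b₃ + (-10356371740454772988427100) * b₁ * b₃ ^ 2 + (-77876489621120867537732908) * b₁ * b₂ + 21903150880694291288187800 * b₁ * b₂ * b₃ + (-39500602363713423441083200) * b₁ * b₂ ^ 2 + (-58806632353993619446152673) * b₁ ^ 2 + 72351857417457382601566486 * b₁ ^ 2 * b₃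 + (-58912568976546685078122372) * b₁ ^ 2 * b₂ + 19299661884596691902877250 * b₁ ^ 3 + 5817042898740822369176750 * b₁ ^ 3 * b₃ + (-15852999119339192835155500) * b₁ ^ 3 * b₂ + (-25737171530341066967552000) * b₁ ^ 4 + (-165524762417287005996870368) * a + 48483291952743535972879992 * a * b₃ + 552368508105103807408600 * a * b₃ ^ 2 + (-179200838478783245612265616) * a * b₂ + 15910381356744051155390000 * a * b₂ * b₃ + (-34030236745908517540414400) * a * b₂ ^ 2 + 34483716567870445101438008 * a * b₁ + (-61264964061314886811494336) * a * b₁ * b₃ + (-6559166264965527874173928) * a * b₁ * b₂ + 81185947010128247591127352 * a * b₁ ^ 2 + (-2156825245193241571609300) * a * b₁ ^ 2 * b₃ + (-20574613274471805411192400) * a * b₁ ^ 2 * b₂ + 49189088018208979583152000 * a * b₁ ^ 3 + (-112877754118836976385712784) * a ^ 2 + 24763002993353272922776812 * a ^ 2 * b₃ + 84208134082028699822196476 * a ^ 2 * b₂ + (-235135026612526825251600) * a ^ 2 * b₁ * b₃ + 19865479171488327693903200 * a ^ 2 * b₁ * b₂ + 34535146054340065557253300 * a ^ 2 * b₁ ^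 2 + 15712601261255601056320500 * a ^ 3 * b₃ + 29308707481753552845977000 * a ^ 3 * b₂ : ℤ) * E322
  have tb3 : (3688010587523434748107000 : ℤ) * b₃ = 0 := by
    linear_combination ((-5621257032375379123881900) + 4865318627528196149445040 * b₃ + 2904890455432178244770720 * b₂ + (-15164695953177513032057820) * b₁ + 14587471942178903561121120 * a : ℤ) * E034 +
      (3381175167863991020567700 + 4865318627528196149445040 * b₃ + 2904890455432178244770720 * b₂ + 6546912202228086748235980 * b₁ + 18626141264289547532411520 * a : ℤ) * E043 +
      (1319596854781457042069500 + (-3331253741308313052961410) * b₃ + (-10839550471223724088078880) * b₂ + 14117716507065115776256130 * b₁ + (-46543997762547368031822580) * a : ℤ) * E124 +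
      ((-17407841089043772308222225) + (-28578965882611071253480110) * b₃ + 33728224913480945155526470 * b₂ + 18232241388065714007672705 * b₁ + 2879949304711442208149300 * b₁ * b₃ + (-10652863393857750972742100) * b₁ * b₂ + 4797695925368986893014450 * b₁ ^ 2 + 50345952607726078456327220 * a + 9351653948675591481612000 * a * b₃ + 8513888231007535965978000 * a * b₂ + 17886017900810190502278100 * a * b₁ + 50843802590988493580786350 * a ^ 2 : ℤ) * E133 +
      ((-3688010587523434748107000) + 5583586442931461461597150 * b₃ + 14883939497920989623800 * b₂ + (-7082234005150208705921050) * b₁ + 7170306134939968413776700 * a : ℤ) * E142 +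
      ((-1950162132752601773318000) + (-17498479360273899771206176) * b₃ + 64321685962799629491575936 * b₂ + (-16586242186508061523936312) * b₁ + (-6062805244886464090085760) * b₁ * b₃ + 21980062150787966699531920 * b₁ * b₂ + 13418150224121975316497488 * b₁ ^ 2 + 104380589987572338700268352 * a + 6955998204568622895499680 * a * b₃ + 24750584490429351178456640 * a * b₂ + (-4516137767157300638693720) * a * b₁ + 22245435573838593370265056 * a ^ 2 : ℤ) * E214 +
      (40683339151123593211800000 + 59000640000950413068810380 * b₃ + (-3129920894307669669450400) * b₃ ^ 2 + (-75520772066463399810068970) * b₂ + 472303553719684176365800 * b₂ * b₃ + 7203453321928602895120000 * b₂ ^ 2 + (-39509451602363016689482665) * b₁ + 547428177058799186486790 * b₁ * b₃ + 2342486887611350923947270 * b₁ * b₂ + (-17355561561613612633632265) * b₁ ^ 2 + (-114009009471193376903747860) * a + (-26101530469428387273277120) * a * b₃ + 33158145704290712668645640 * a * b₂ + (-47608876527384770567457220) * a * b₁ + (-79171506631023097659671550) * a ^ 2 : ℤ) * E223 +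
      (3688010587523434748107000 + (-87342532015804097334814984) * b₃ + (-3129920894307669669450400) * b₃ ^ 2 + 83225780338693238335049634 * b₂ + 472303553719684176365800 * b₂ * b₃ + 7203453321928602895120000 * b₂ ^ 2 + 32050989261395731007103067 * b₁ + (-2477793547900799666782850) * b₁ * b₃ + 9017055112320665866690150 * b₁ * b₂ + 29309533286228016637715567 * b₁ ^ 2 + 74820721447560929014183468 * a + (-13207736138326638071266400) * a * b₃ + 56621182095711694858908200 * a * b₂ + (-14740522082794435570564300) * a * b₁ + 55884251911711779557298734 * a ^ 2 : ℤ) * E232 +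
      ((-3688010587523434748107000) + 207994909816299040203709035 * b₃ + (-31184231447065548313109422) * b₃ ^ 2 + (-226309705479169727035739700) * b₂ + 103770112599376446109762470 * b₂ * b₃ + (-141454976255081092051502352) * b₂ ^ 2 + (-91544167334446258952929651) * b₁ + 13063092629847754558259257 * b₁ * b₃ + (-8271644437836128354628200) * b₁ * b₃ ^ 2 + (-55775187857422060802672726) * b₁ * b₂ + 16230230478367465125526800 * b₁ * b₂ * b₃ + (-33925672587961511649831800) * b₁ * b₂ ^ 2 + (-53871688036046163288786331) * b₁ ^ 2 + 66783303523046361929161242 * b₁ ^ 2 * b₃ + (-50792022476930586214852084) * b₁ ^ 2 * b₂ + 15341218154673863194306470 * b₁ ^ 3 + 5141723543528458685177800 * b₁ ^ 3 * b₃ + (-11326130360201235623342600) * b₁ ^ 3 * b₂ + (-24289563471103411235116500) * b₁ ^ 4 + (-138314084748261747210297136) * a + 29474610056645982282634464 * a * b₃ + 1960561844403479268838400 * a * b₃ ^ 2 + (-146073806133896634707876992) * a * b₂ + 6936597626219423508476000 * a * b₂ * b₃ + (-21715442630052764092305600) * a * b₂ ^ 2 + 38235835606773498139083656 * a * b₁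 + (-57367613780196884771259392) * a * b₁ * b₃ + (-1805008219254209561505416) * a * b₁ * b₂ + 78140240043973968608445024 * a * b₁ ^ 2 + (-1578872297861829112529200) * a * b₁ ^ 2 * b₃ + (-15682175005278366563067600) * a * b₁ ^ 2 * b₂ + 43513086389032190905310800 * a * b₁ ^ 3 + (-95611925261251029887522368) * a ^ 2 + 14033506512589329650856264 * a ^ 2 * b₃ + 83280284921780262747998272 * a ^ 2 * b₂ + (-1236350131788851462241600) * a ^ 2 * b₁ * b₃ + 19959192855028532644283200 * a ^ 2 * b₁ * b₂ + 33917694538294217119281900 * a ^ 2 * b₁ ^ 2 + 12204841550991724133172400 * a ^ 3 * b₃ + 28671282145182794523733200 * a ^ 3 * b₂ : ℤ) * E322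
  have tab1 : (7376021175046869496214000 : ℤ) * (a * b₁) = 0 := by
    linear_combination (721275833336408401461980 + 1488301085964613959325120 * b₃ + (-137906799498655506093440) * b₂ + (-4471308721875420483484540) * b₁ + 2690568955637043465182400 * a : ℤ) * E034 +
      (577798976540869083125980 + 1488301085964613959325120 * b₃ + (-137906799498655506093440) * b₂ + 382943440556821894496660 * b₁ + 4123305660198782462649600 * a : ℤ) * E043 +
      ((-2668711363427245273856420) + (-3119115265416127659182230) * b₃ + 450961332289573022105760 * b₂ + 5137518701527944363528110 * b₁ + (-9540885409476927258315500) * a : ℤ) * E124 +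
      ((-3530244475229486266613795) + (-6193879496600853404201030) * b₃ + 6932848918637995225897010 * b₂ + 5617933237823872868436935 * b₁ + 592333420141473634200400 * b₁ * b₃ + (-2107865903142609946299800) * b₁ * b₂ + 982151056422098811451450 * b₁ ^ 2 + 12882087262995306777783500 * a + 2992291815464486007320000 * a * b₃ + 517092481032586492304000 * a * b₂ + 2011773532902748575151700 * a * b₁ + 11816834771456151189878950 * a ^ 2 : ℤ) * E133 +
      (405715777835169063692650 * b₃ + 117662602716115214795600 * b₂ + (-2522523909171635167607550) * b₁ + 1391809846680545284385700 * a : ℤ) * E142 +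
      (3982649234773091368619680 + 312738802553114421634688 * b₃ + 10433990376793802470217392 * b₂ + (-7481708880334275244135744) * b₁ + (-26738918156050565782080) * b₁ * b₃ + 3171978062876773341318560 * b₁ * b₂ + 2317248450879016864051376 * b₁ ^ 2 + 23779154803394939245733824 * a + 1465911849528434456067840 * a * b₃ + 5380667321763398833157120 * a * b₂ + (-4348747402061004570584280) * a * b₁ + 5669224422766761194566832 * a ^ 2 : ℤ) * E214 +
      (8643586631890804600135480 + 13403989003178478709643020 * b₃ + (-1207647562049076415241200) * b₃ ^ 2 + (-16281551982945704895247990) * b₂ + 2696616686159778700865200 * b₂ * b₃ + (-1157705443238124265213600) * b₂ ^ 2 + (-10764596845879440030328535) * b₁ + (-1372516849950738437836530) * b₁ * b₃ + 1343618786663209892171810 * b₁ * b₂ + (-3271679033073666030150815) * b₁ ^ 2 + (-28512250085438344871234540) * a + (-7722153734658903382988560) * a * b₃ + 7732006977485744030072920 * a * b₂ + (-4028884092188771384108380) * a * b₁ + (-18173885298619282420976850) * a ^ 2 : ℤ) * E223 +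
      ((-21101037442910102143769648) * b₃ + (-1207647562049076415241200) * b₃ ^ 2 + 24052774298082508619250798 * b₂ + 2696616686159778700865200 * b₂ * b₃ + (-1157705443238124265213600) * b₂ ^ 2 + 11232106558383572176137549 * b₁ + (-219585054022332129962850) * b₁ * b₃ + 1274045089819207710810050 * b₁ * b₂ + 6047925007771192758938049 * b₁ ^ 2 + 20593108306093192787200596 * a + (-4907312460080391289491600) * a * b₃ + 13380936321329376412122200 * a * b₂ + (-3500104337863551403720500) * a * b₁ + 13963620878443161750631298 * a ^ 2 : ℤ) * E232 +
      (51555328988724170262277525 * b₃ + (-7633799043485576920709654) * b₃ ^ 2 + (-61022368021585967654997300) * b₂ + 20829144571684505422440970 * b₂ * b₃ + (-27741088396918430688656024) * b₂ ^ 2 + (-30234369538239278260105437) * b₁ + 5512312267522797163069899 * b₁ * b₃ + (-2375567736572953907350000) * b₁ * b₃ ^ 2 + (-14593699086570078808731162) * b₁ * b₂ + 3858395440474061320999200 * b₁ * b₂ * b₃ + (-5789632271455751177020400) * b₁ * b₂ ^ 2 + (-13759492773841248565847717) * b₁ ^ 2 + 16966233816446789931712014 * b₁ ^ 2 * b₃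 + (-12401144790701541100532428) * b₁ ^ 2 * b₂ + 2695347449555722828166970 * b₁ ^ 3 + 1167920174523877492108800 * b₁ ^ 3 * b₃ + (-2992113836537335291119600) * b₁ ^ 3 * b₂ + (-5794556390520074117314900) * b₁ ^ 4 + (-38256233142921528558719152) * a + 16360148417800377527175008 * a * b₃ + (-96570092210616001246400) * a * b₃ ^ 2 + (-39360522360181086598906384) * a * b₂ + 3776725806001983656456000 * a * b₂ * b₃ + (-7167171243161503307926400) * a * b₂ ^ 2 + 6707605008563289830324232 * a * b₁ + (-12282928443823308584525584) * a * b₁ * b₃ + (-2337103961325187883882232) * a * b₁ * b₂ + 17028745961975041738359168 * a * b₁ ^ 2 + (-816763204275878588072000) * a * b₁ ^ 2 * b₃ + (-3138439991082335366420000) * a * b₁ ^ 2 * b₂ + 10080254649027956522225200 * a * b₁ ^ 3 + (-23966131385529006223711376) * a ^ 2 + 7788296914554662091609888 * a ^ 2 * b₃ + 8847964670443336068009824 * a ^ 2 * b₂ + (-33493331518139552584000) * a ^ 2 * b₁ * b₃ + 2447235939495769202960000 * a ^ 2 * b₁ * b₂ + 8115952536183758899322300 * a ^ 2 * b₁ ^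 2 + 3935873426081372607777600 * a ^ 3 * b₃ + 2739888248585769353560800 * a ^ 3 * b₂ : ℤ) * E322
  have ta2 : (7376021175046869496214000 : ℤ) * (a * (a + 2)) = 0 := by
    linear_combination ((-792304358648556199763280) + (-222119343037447527073700) * b₃ + 796120207130360397260000 * b₂ + (-5915765381264718297520) * b₁ + 981387765143645471828360 * a : ℤ) * E034 +
      (553341035864139879222520 + (-222119343037447527073700) * b₃ + 796120207130360397260000 * b₂ + 496154489685232555432680 * b₁ + 366087500342203541894360 * a : ℤ) * E043 +
      ((-1581138242075759565641680) + 594666052374827810077800 * b₃ + (-1432115355589576156622500) * b₂ + 51432962100509754583180 * b₁ + (-4076522305103961990172840) * a : ℤ) * E124 +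
      ((-521702474713671285736730) + (-2401949165877951552817125) * b₃ + 4069953664982754509325050 * b₂ + (-458178735029916756552670) * b₁ + 405486205153549871611625 * b₁ * b₃ + (-177980310112512507292250) * b₁ * b₂ + (-1066066083448494729028100) * b₁ ^ 2 + 4205262147629918510061060 * a + (-661881846202066707984000) * a * b₃ + 1883284895833647419887500 * a * b₂ + 1522139577062589908382100 * a * b₁ + 2768692874962665763127600 * a ^ 2 : ℤ) * E133 +
      ((-3688010587523434748107000) + (-160034907874748899078700) * b₃ + 1309558981503549925733300 * b₂ + (-496708078779989443106600) * b₁ + (-649030217223598888526600) * a : ℤ) * E142 +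
      (6113049593114215602637720 + (-736564815660470765339696) * b₃ + 592828733294594514286096 * b₂ + 1871864358321729151257248 * b₁ + (-1304497648508788483506900) * b₁ * b₃ + 1666126649281496135455600 * b₁ * b₂ + 2057238393753263396143628 * b₁ ^ 2 + 8856551652340983118293992 * a + 1364484447783440525035800 * a * b₃ + (-939843947073272755530400) * a * b₂ + 2509995445820121659285320 * a * b₁ + 1400949092651399320390416 * a ^ 2 : ℤ) * E214 +
      (653418551417603589667920 + 4400717935738279272405720 * b₃ + 341872844887894383287750 * b₃ ^ 2 + (-9108644600591027008784820) * b₂ + (-2580663336256093018400300) * b₂ * b₃ + 3473652693751459149787600 * b₂ ^ 2 + (-879593569471685015540060) * b₁ + 907234549234629142858700 * b₁ * b₃ + (-3469059639499397424849850) * b₁ * b₂ + 2077763905937877927749520 * b₁ ^ 2 + (-9425655527279773166559440) * a + (-462244028989581681764200) * a * b₃ + 1375076385828628870162800 * a * b₂ + (-7315839756768459130844080) * a * b₁ + (-6066100268318701039042800) * a ^ 2 : ℤ) * E223 +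
      (7376021175046869496214000 + (-1876238127720896017884924) * b₃ + 341872844887894383287750 * b₃ ^ 2 + (-5640005684809555081302276) * b₂ + (-2580663336256093018400300) * b₂ * b₃ + 3473652693751459149787600 * b₂ ^ 2 + 3066536124319523248748212 * b₁ + (-29207599525362354347700) * b₁ * b₃ + (-2064676712403510559774350) * b₁ * b₂ + 3410670465354805400912212 * b₁ ^ 2 + 2118929876897783061600048 * a + 1009635051730854339756400 * a * b₃ + 474640448709870561209400 * a * b₂ + (-1084442490829559373441400) * a * b₁ + 1572709120583729467798024 * a ^ 2 : ℤ) * E232 +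
      ((-14752042350093738992428000) + 5045623426181858434693780 * b₃ + (-1751245885946120949626272) * b₃ ^ 2 + 6715994104724052241396700 * b₂ + 6692651141195487292681990 * b₂ * b₃ + (-10706759334886620459969992) * b₂ ^ 2 + (-7816205817388851878225896) * b₁ + (-387390217784616150883718) * b₁ * b₃ + (-50435738027022390274100) * b₁ * b₃ ^ 2 + 6956648824804034189971754 * b₁ * b₂ + (-1138780684007231541943800) * b₁ * b₂ * b₃ + (-1443972949129254659552000) * b₁ * b₂ ^ 2 + (-5634566964620274554824156) * b₁ ^ 2 + 5918082810592078218827272 * b₁ ^ 2 * b₃ + (-1384677594092138304221944) * b₁ ^ 2 * b₂ + (-1874338913574075770956560) * b₁ ^ 3 + 392308582914916773561850 * b₁ ^ 3 * b₃ + 1121732232977639632462300 * b₁ ^ 3 * b₂ + (-2890494438265033132063100) * b₁ ^ 4 + (-3262120260863165439839536) * a + (-7766282170421676349657896) * a * b₃ + 1175702043524837191670600 * a * b₃ ^ 2 + 359776819583886852159648 * a * b₂ + (-4521807834645838947958000) * a * b₂ * b₃ + 4340807495192329129233600 * a * b₂ ^ 2 + 7018677120812507520968816 * a * b₁ + (-4941488839354351345261952)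 * a * b₁ * b₃ + 1796695350584269628782704 * a * b₁ * b₂ + 7799310184080017486192424 * a * b₁ ^ 2 + 40452673846717163900900 * a * b₁ ^ 2 * b₃ + 816980115891871789309200 * a * b₁ ^ 2 * b₂ + 1888529040292254720185200 * a * b₁ ^ 3 + (-1042447941197312839878368) * a ^ 2 + (-3456360785319722816470076) * a ^ 2 * b₃ + 9911430613928004796494452 * a ^ 2 * b₂ + (-837327654784365939322800) * a ^ 2 * b₁ * b₃ + 2955385706405329294093600 * a ^ 2 * b₁ * b₂ + 4020661207189244178241400 * a ^ 2 * b₁ ^ 2 + (-133615836647966720000900) * a ^ 3 * b₃ + 3564889940576864980399800 * a ^ 3 * b₂ : ℤ) * E322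
  have tb1sq : (3688010587523434748107000 : ℤ) * (b₁ * (b₁ + 1)) = 0 := by
    linear_combination ((-4922322277247332459322980) + 3464790443333259830472560 * b₃ + 2804679171256874784998080 * b₂ + (-11355205250558934638876260) * b₁ + 11973541517085460260556640 * a : ℤ) * E034 +
      (2890490482663651124205420 + 3464790443333259830472560 * b₃ + 2804679171256874784998080 * b₂ + 5329983209789353142971340 * b₁ + 14589916743817529519987040 * a : ℤ) * E043 +
      (897736126869462400789620 + (-1416928144108376516033990) * b₃ + (-10687489441475087944397120) * b₂ + 10090360628185119057270990 * b₁ + (-38506521093752338314176860) * a : ℤ) * E124 +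
      ((-14022687615481472919563355) + (-24290001864747411537218890) * b₃ + 29850741334928140801806030 * b₂ + 15060355460336188794522415 * b₁ + 2387107198245791653785700 * b₁ * b₃ + (-8234877125061311097138400) * b₁ * b₂ + 3334486952252011502107650 * b₁ ^ 2 + 42725303877706282437648940 * a + 6511038053231409315768000 * a * b₃ + 7739312621395220488134000 * a * b₂ + 15209910026603927372817500 * a * b₁ + 41260225785634307626367750 * a ^ 2 : ℤ) * E133 +
      ((-3688010587523434748107000) + 4534967703275264274296650 * b₃ + (-370067367606648326996400) * b₂ + (-6132836302735272559545550) * b₁ + 5369453918569509495144100 * a : ℤ) * E142 +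
      ((-1915006047353214138784080) + (-17460989188800440425524448) * b₃ + 54234305747894844281347088 * b₂ + (-10047044653211055107054136) * b₁ + (-5594156595416022422334640) * b₁ * b₃ + 17944606901237943660787680 * b₁ * b₂ + 12541242276644019933788744 * b₁ ^ 2 + 87897295506782412327904096 * a + 5935732194530265737137120 * a * b₃ + 18356965659766835419618560 * a * b₂ + (-2012070753953241273011880) * a * b₁ + 19056851409453088304457488 * a ^ 2 : ℤ) * E214 +
      (33539846331065726286561720 + 49748395698509148408607740 * b₃ + (-2062385791789283102938200) * b₃ ^ 2 + (-65180075717864973886153350) * b₂ + (-1610640850873242227406400) * b₂ * b₃ + 7896563451953169871377600 * b₂ ^ 2 + (-34235516345417906975196355) * b₁ + 1123889734687501927610610 * b₁ * b₃ + (-148387447157441130532270) * b₁ * b₂ + (-13475229616810253445232875) * b₁ ^ 2 + (-97459924256019031276286780) * a + (-20487725061103456323287280) * a * b₃ + 27608156807078771632338360 * a * b₂ + (-42807157456053554734685980) * a * b₁ + (-65774204885242865129165450) * a ^ 2 : ℤ) * E223 +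
      ((-71735246930166327016207432) * b₃ + (-2062385791789283102938200) * b₃ ^ 2 + 66449873524033891838677182 * b₂ + (-1610640850873242227406400) * b₂ * b₃ + 7896563451953169871377600 * b₂ ^ 2 + 26174140029498058486203641 * b₁ + (-2143071366399745858342750) * b₁ * b₃ + 6024388446536000091230050 * b₁ * b₂ + 25315825141712172147082141 * b₁ ^ 2 + 59620878032668338316010564 * a + (-10009123566953122275501200) * a * b₃ + 44845076058118259887229400 * a * b₂ + (-12641075700597915517744100) * a * b₁ + 45331523800205382580256282 * a ^ 2 : ℤ) * E232 +
      (3688010587523434748107000 + 168367903484565728294397425 * b₃ + (-26760887266841854143546546) * b₃ ^ 2 + (-180066567375950138605435380) * b₂ + 89716571620528958876820490 * b₂ * b₃ + (-119204249077114301149012496) * b₂ ^ 2 + (-71751218583126410786954833) * b₁ + 8945413400934924552432211 * b₁ * b₃ + (-6136481397190461330555200) * b₁ * b₃ ^ 2 + (-40630534918527288257584298) * b₁ * b₂ + 11696090760047870504809600 * b₁ * b₂ * b₃ + (-26906769863080345199028400) * b₁ * b₂ ^ 2 + (-43302176753478432576595833) * b₁ ^ 2 + 55296666818043263037928726 * b₁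 ^ 2 * b₃ + (-41286798383222349047359852) * b₁ ^ 2 * b₂ + 13257113338325110256692250 * b₁ ^ 3 + 4074095605401178227617000 * b₁ ^ 3 * b₃ + (-7920993834040918043992000) * b₁ ^ 3 * b₂ + (-19951460973600722370617900) * b₁ ^ 4 + (-107841286818373322983884368) * a + 18232210330970104942046832 * a * b₃ + 2193053137177017538597600 * a * b₃ ^ 2 + (-113306550608593910655648016) * a * b₂ + 2484621730340634809520000 * a * b₂ * b₃ + (-13741456009389339773430400) * a * b₂ ^ 2 + 34969277524864043655760488 * a * b₁ + (-48528774659724531385762496) * a * b₁ * b₃ + 1152454475872839122380392 * a * b₁ * b₂ + 67295222893739672139570272 * a * b₁ ^ 2 + (-1041372024377133817350000) * a * b₁ ^ 2 * b₃ + (-11606716851976799504252000) * a * b₁ ^ 2 * b₂ + 35948555719563147507284400 * a * b₁ ^ 3 + (-77303648462467770549453584) * a ^ 2 + 6760370817145109195405792 * a ^ 2 * b₃ + 72441005147603820877305616 * a ^ 2 * b₂ + (-1400237582180810159908800) * a ^ 2 * b₁ * b₃ + 17097520832163408300569600 * a ^ 2 * b₁ * b₂ + 29279581815059124503069100 * a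 ^ 2 * b₁ ^ 2 + 8830697677375813930025200 * a ^ 3 * b₃ + 24468966868035171221089600 * a ^ 3 * b₂ : ℤ) * E322
  have hb2 : b₂ = 0 := by
    rcases mul_eq_zero.mp tb2 with h' | h'
    · norm_num at h'
    · exact h'
  have hb3 : b₃ = 0 := by
    rcases mul_eq_zero.mp tb3 with h' | h'
    · norm_num at h'
    · exact h'
  have hab : a * b₁ = 0 := by
    rcases mul_eq_zero.mp tab1 with h' | h'
    · norm_num at h'
    · exact h'
  have ha : a * (a + 2) = 0 := by
    rcases mul_eq_zero.mp ta2 with h' | h'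
    · norm_num at h'
    · exact h'
  have hb1 : b₁ * (b₁ + 1) = 0 := by
    rcases mul_eq_zero.mp tb1sq with h' | h'
    · norm_num at h'
    · exact h'
  subst hb2 hb3
  rcases mul_eq_zero.mp ha with ha' | ha' <;> rcases mul_eq_zero.mp hb1 with hb' | hb'
  · subst ha'; rw [hb']; norm_num
  · have hb : b₁ = -1 := by omega
    subst ha' hb; norm_num
  · have ha : a = -2 := by omega
    subst ha hb'; norm_num
  · exfalso
    have ha : a = -2 := by omega
    have hb : b₁ = -1 := by omega
    rw [ha, hb] at hab; norm_num at hab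
end

section
/- Let S_1(T,U,V) = T^2 + t_1(U+V)T + t_2^0(U^2+V^2) + t_2^1 UV with integer coefficients. If the product S_1(T+U,U,V)·S_2(T,U,V), where S_2 is a monic symmetric-in-(U,V) polynomial of degree 5 in T, is congruent modulo the ideal (R^4(U,V), U^5) ⊂ ℤ[T,U,V] to a polynomial in T and U alone plus multiples of R^4 and R^5, then (t_1, t_2^0, t_2^1) ∈ {(0,0,0), (−1,0,0)}. -/
/-!
Since `(U - V) R⁴ = U⁵ - V⁵` and `R⁵ = U⁵ + V R⁴`, multiplying the hypothesis by `U - V` gives a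
congruence modulo the monomial ideal `(U⁵, V⁵)` in which `Q(T, U)` only contributes monomials of
`V`-degree at most one. Hence the coefficient of `T^k U^a V^b` in `(U - V) S₁(T + U) S₂` vanishes
whenever `a ≤ 4` and `2 ≤ b ≤ 4`. In degree 8 these are linear equations in the coefficients of
`S₂` (paired by the symmetry `U ↔ V`, with `T⁵` having coefficient 1). Eliminating them leaves
`t₁² + t₁ = 2(t₃ - t₂)`, `(1 + t₁)(t₁² - t₁ - 6t₂) = 0` and `t₁(t₁ + 2)(1 - t₁² + 4t₂) = 0`;
besides `(0, 0, 0)` and `(-1, 0, 0)` these only allow `t₁ ∈ {1, -2, -3}`, which the remaining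
equations exclude.
-/

open MvPolynomial

noncomputable def expTUV (k a b : ℕ) : Fin 3 →₀ ℕ :=
  Finsupp.single 0 k + Finsupp.single 1 a + Finsupp.single 2 b

lemma expTUV_apply (k a b : ℕ) (i : Fin 3) :
    expTUV k a b i = if i = 0 then k else if i = 1 then a else b := by
  fin_cases i <;> simp [expTUV]

lemma expTUV_le_expTUV {k a b k' a' b' : ℕ} :
    expTUV k a b ≤ expTUV k' a' b' ↔ k ≤ k' ∧ a ≤ a' ∧ b ≤ b' := by
  simp [Finsupp.le_def, Fin.forall_fin_succ, expTUV_apply]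

lemma expTUV_sub_expTUV (k a b k' a' b' : ℕ) :
    expTUV k' a' b' - expTUV k a b = expTUV (k' - k) (a' - a) (b' - b) := by
  ext i
  fin_cases i <;> simp [expTUV_apply]

lemma mapDomain_swap_expTUV (k a b : ℕ) :
    Finsupp.mapDomain (Equiv.swap (1 : Fin 3) 2) (expTUV k a b) = expTUV k b a := by
  ext i
  fin_cases i <;>
    simp [expTUV, Finsupp.mapDomain_add, Finsupp.mapDomain_single, Equiv.swap_apply_of_ne_of_ne]

lemma monomial_expTUV (k a b : ℕ) (c : ℤ) :
    monomial (expTUV k a b) c = C c * T ^ k * U ^ a * V ^ b := by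
  simp only [T, U, V, X_pow_eq_monomial, C_mul_monomial, monomial_mul, expTUV, mul_one]

lemma T_pow_eq_monomial (n : ℕ) : T ^ n = monomial (expTUV n 0 0) 1 := by
  simp [monomial_expTUV]

lemma U_pow_eq_monomial (n : ℕ) : U ^ n = monomial (expTUV 0 n 0) 1 := by
  simp [monomial_expTUV]

lemma V_pow_eq_monomial (n : ℕ) : V ^ n = monomial (expTUV 0 0 n) 1 := by
  simp [monomial_expTUV]

lemma coeff_rename_castSucc_eq_zero {A : Type*} [CommSemiring A] {n : ℕ}
    (p : MvPolynomial (Fin n) A) {d : Fin (n + 1) →₀ ℕ} (hd : d (Fin.last n) ≠ 0) :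
    coeff d (rename Fin.castSucc p) = 0 := by
  refine coeff_rename_eq_zero _ _ _ fun u hu => absurd ?_ hd
  rw [← hu]
  exact Finsupp.mapDomain_of_notMem_range _ _ fun ⟨i, hi⟩ => Fin.castSucc_ne_last i hi

lemma coeff_rename_succ_eq_zero {A : Type*} [CommSemiring A] {n : ℕ}
    (p : MvPolynomial (Fin n) A) {d : Fin (n + 1) →₀ ℕ} (hd : d 0 ≠ 0) :
    coeff d (rename Fin.succ p) = 0 := by
  refine coeff_rename_eq_zero _ _ _ fun u hu => absurd ?_ hd
  rw [← hu]
  exact Finsupp.mapDomain_of_notMem_range _ _ fun ⟨i, hi⟩ => Fin.succ_ne_zero i hi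

lemma coeff_expTUV_rename_castSucc (p : MvPolynomial (Fin 2) ℤ) {k a b : ℕ} (hb : b ≠ 0) :
    coeff (expTUV k a b) (rename Fin.castSucc p) = 0 :=
  coeff_rename_castSucc_eq_zero p (by simpa [expTUV_apply] using hb)

lemma coeff_expTUV_rename_succ (p : MvPolynomial (Fin 2) ℤ) {k a b : ℕ} (hk : k ≠ 0) :
    coeff (expTUV k a b) (rename Fin.succ p) = 0 :=
  coeff_rename_succ_eq_zero p (by simpa [expTUV_apply] using hk)

lemma R_mul_sub (n : ℕ) : _root_.R n * (U - V) = U ^ (n + 1) - V ^ (n + 1) := by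
  simpa only [_root_.R, Nat.add_sub_cancel] using geom_sum₂_mul U V (n + 1)

lemma R_succ (n : ℕ) : _root_.R (n + 1) = U ^ (n + 1) + V * _root_.R n := by
  rw [_root_.R, Finset.sum_range_succ, Nat.sub_self, pow_zero, mul_one, add_comm, _root_.R,
    Finset.mul_sum]
  congr 1
  refine Finset.sum_congr rfl fun k hk => ?_
  rw [Nat.sub_add_comm (Nat.lt_succ_iff.mp (Finset.mem_range.mp hk)), pow_succ]
  ring

lemma sub_mul_mem_span_pow {n : ℕ} {p : MP} (hp : p ∈ Ideal.span {_root_.R n, U ^ (n + 1)}) :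
    (U - V) * p ∈ Ideal.span {U ^ (n + 1), V ^ (n + 1)} := by
  obtain ⟨x, y, rfl⟩ := Ideal.mem_span_pair.mp hp
  refine Ideal.mem_span_pair.mpr ⟨x + y * (U - V), -x, ?_⟩
  linear_combination -x * R_mul_sub n

lemma coeff_expTUV_eq_zero_of_mem_span_pow {n : ℕ} {p : MP}
    (hp : p ∈ Ideal.span {U ^ n, V ^ n}) {k a b : ℕ} (ha : a < n) (hb : b < n) :
    coeff (expTUV k a b) p = 0 := by
  obtain ⟨x, y, rfl⟩ := Ideal.mem_span_pair.mp hp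
  simp [U_pow_eq_monomial, V_pow_eq_monomial, coeff_mul_monomial', expTUV_le_expTUV,
    not_le.mpr ha, not_le.mpr hb]

lemma coeff_sub_mul_rename_castSucc (p : MvPolynomial (Fin 2) ℤ) {k a b : ℕ} (hb : 2 ≤ b) :
    coeff (expTUV k a b) ((U - V) * rename Fin.castSucc p) = 0 := by
  rw [← pow_one U, ← pow_one V, U_pow_eq_monomial, V_pow_eq_monomial, sub_mul, coeff_sub,
    coeff_monomial_mul', coeff_monomial_mul']
  simp only [expTUV_le_expTUV, expTUV_sub_expTUV]
  rw [coeff_expTUV_rename_castSucc p (by omega), coeff_expTUV_rename_castSucc p (by omega)]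
  simp

lemma coeff_sub_mul_eq_zero_of_mem_span {n : ℕ} {P A B : MP} {Q : MvPolynomial (Fin 2) ℤ}
    (h : P - (rename Fin.castSucc Q + A * _root_.R n + B * _root_.R (n + 1)) ∈
      Ideal.span {_root_.R n, U ^ (n + 1)})
    {k a b : ℕ} (ha : a ≤ n) (hb₂ : 2 ≤ b) (hbn : b ≤ n) :
    coeff (expTUV k a b) ((U - V) * P) = 0 := by
  have hAB : A * _root_.R n + B * _root_.R (n + 1) ∈ Ideal.span {_root_.R n, U ^ (n + 1)} :=
    Ideal.mem_span_pair.mpr ⟨A + B * V, B, by rw [R_succ n]; ring⟩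
  have hP : P - rename Fin.castSucc Q ∈ Ideal.span {_root_.R n, U ^ (n + 1)} := by
    convert add_mem h hAB using 1
    ring
  have := coeff_expTUV_eq_zero_of_mem_span_pow (sub_mul_mem_span_pow hP) (k := k)
    (Nat.lt_succ_of_le ha) (Nat.lt_succ_of_le hbn)
  rwa [mul_sub, coeff_sub, coeff_sub_mul_rename_castSucc Q hb₂, sub_zero] at this

lemma coeff_expTUV_five_of_monic {S : MP}
    (h : ∃ c : Fin 5 → MvPolynomial (Fin 2) ℤ,
      S = T ^ 5 + ∑ i : Fin 5, rename Fin.succ (c i) * T ^ (i : ℕ)) :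
    coeff (expTUV 5 0 0) S = 1 := by
  obtain ⟨c, rfl⟩ := h
  rw [coeff_add, coeff_sum, Finset.sum_eq_zero fun i _ => ?_]
  · simp [T_pow_eq_monomial]
  rw [T_pow_eq_monomial, coeff_mul_monomial', expTUV_sub_expTUV,
    coeff_expTUV_rename_succ _ (by omega)]
  simp

lemma coeff_expTUV_comm_of_rename_swap {S : MP} (h : rename (Equiv.swap (1 : Fin 3) 2) S = S)
    (k a b : ℕ) : coeff (expTUV k a b) S = coeff (expTUV k b a) S := by
  conv_lhs => rw [← h, ← mapDomain_swap_expTUV k b a, coeff_rename_mapDomain _ (Equiv.injective _)]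

lemma sub_mul_quad_T_add_U (t₁ t₂ t₃ : ℤ) :
    (U - V) * quad t₁ t₂ t₃ (T + U) =
      monomial (expTUV 2 1 0) 1 - monomial (expTUV 2 0 1) 1 + monomial (expTUV 1 2 0) (2 + t₁)
        - monomial (expTUV 1 1 1) 2 - monomial (expTUV 1 0 2) t₁
        + monomial (expTUV 0 3 0) (1 + t₁ + t₂) + monomial (expTUV 0 2 1) (t₃ - 1 - t₂)
        + monomial (expTUV 0 1 2) (t₂ - t₁ - t₃) - monomial (expTUV 0 0 3) t₂ := by
  simp only [quad, monomial_expTUV, map_add, map_sub, map_one, map_ofNat]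
  ring

/-- Here `c k a b` is the coefficient of `T^k U^a V^b` in `S₂`, written with `a ≥ b` by symmetry and
with the coefficient `1` of `T⁵` substituted; `h_kab` says that the coefficient of `T^k U^a V^b`
in `(U - V) · S₁(T + U) · S₂` vanishes. -/
theorem params_of_coeff_equations {t₁ t₂ t₃ : ℤ} (c : ℕ → ℕ → ℕ → ℤ)
    (h₆₀₂ : c 4 1 0 + t₁ = 0)
    (h₅₀₃ : c 3 2 0 + t₁ * c 4 1 0 + t₂ = 0)
    (h₅₁₂ : c 3 2 0 - c 3 1 1 - (2 + t₁) * c 4 1 0 + t₂ - t₁ - t₃ = 0)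
    (h₄₂₂ : 2 * (c 3 2 0 - c 3 1 1) - (1 + t₁) * c 4 1 0 = 0)
    (h₄₀₄ : c 2 3 0 + t₁ * c 3 2 0 + t₂ * c 4 1 0 = 0)
    (h₄₁₃ : c 2 3 0 - c 2 2 1 - t₁ * c 3 1 1 - 2 * c 3 2 0 - (t₁ + t₃) * c 4 1 0 = 0)
    (h₃₁₄ : c 1 4 0 - c 1 3 1 - t₁ * c 2 2 1 - 2 * c 2 3 0 - t₂ * c 3 1 1
      - (t₁ - t₂ + t₃) * c 3 2 0 = 0)
    (h₃₃₂ : c 1 2 2 - c 1 3 1 + t₁ * (c 2 2 1 - c 2 3 0) - (1 + t₂ - t₃) * c 3 1 1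
      + (1 + 2 * t₂ - t₃) * c 3 2 0 = 0)
    (h₃₂₃ : c 1 3 1 - c 1 2 2 - (2 + t₁) * (c 2 2 1 - c 2 3 0) - (t₁ - t₂ + t₃) * c 3 1 1
      - (1 + 2 * t₂ - t₃) * c 3 2 0 = 0)
    (h₂₂₄ : c 0 4 1 - c 0 3 2 + 2 * (c 1 4 0 - c 1 3 1) + t₁ * (c 1 4 0 - c 1 2 2 - c 2 2 1)
      - t₃ * c 2 2 1 - (1 + t₂ - t₃) * c 2 3 0 = 0)
    (h₂₄₂ : c 0 3 2 - c 0 4 1 + (2 + t₁) * c 1 2 2 - 2 * c 1 3 1 - t₁ * c 1 4 0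
      + (t₁ + t₃) * c 2 2 1 - (t₁ - t₂ + t₃) * c 2 3 0 = 0)
    (h₀₄₄ : (1 + t₁) * (c 0 4 1 - c 0 3 2) = 0) :
    (t₁, t₂, t₃) = (0, 0, 0) ∨ (t₁, t₂, t₃) = (-1, 0, 0) := by
  have e₄₁₀ : c 4 1 0 = -t₁ := by linear_combination h₆₀₂
  have e₃₂₀ : c 3 2 0 = t₁ ^ 2 - t₂ := by linear_combination h₅₀₃ - t₁ * e₄₁₀
  have e₃₁₁ : c 3 1 1 = 2 * t₁ ^ 2 + t₁ - t₃ := by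
    linear_combination -h₅₁₂ + e₃₂₀ - (2 + t₁) * e₄₁₀
  have e₂₃₀ : c 2 3 0 = 2 * t₁ * t₂ - t₁ ^ 3 := by
    linear_combination h₄₀₄ - t₁ * e₃₂₀ - t₂ * e₄₁₀
  have e₂₂₁ : c 2 2 1 = 2 * t₂ + 2 * t₁ * t₂ + 2 * t₁ * t₃ - 2 * t₁ ^ 2 - 3 * t₁ ^ 3 := by
    linear_combination -h₄₁₃ + e₂₃₀ - t₁ * e₃₁₁ - 2 * e₃₂₀ - (t₁ + t₃) * e₄₁₀
  have h₃ : t₁ ^ 2 + t₁ = 2 * (t₃ - t₂) := by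
    linear_combination -h₄₂₂ + 2 * e₃₂₀ - 2 * e₃₁₁ - (1 + t₁) * e₄₁₀
  have h₂ : (1 + t₁) * (t₁ ^ 2 - t₁ - 6 * t₂) = 0 := by
    linear_combination 2 * (h₃₂₃ + h₃₃₂) + 4 * e₂₂₁ - 4 * e₂₃₀ + 2 * (1 + t₁) * e₃₁₁
      - (3 * t₁ - 1) * h₃
  have h₁ : t₁ * (t₁ + 2) * (1 - t₁ ^ 2 + 4 * t₂) = 0 := by
    linear_combination 2 * (h₂₂₄ + h₂₄₂ - 2 * h₃₁₄ - 2 * h₃₃₂) - 2 * (3 + t₁) * e₂₃₀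
      - 2 * (2 + 4 * t₂ - 2 * t₃) * e₃₁₁ - 2 * (2 * t₁ - 6 * t₂ + 4 * t₃ - 2) * e₃₂₀
      - (2 + t₁ - t₁ ^ 2 + 6 * t₂ - 2 * t₃) * h₃
  rcases eq_or_ne (1 + t₁) 0 with ht₁ | ht₁
  · obtain rfl : t₁ = -1 := by linarith
    obtain rfl : t₂ = 0 := by linarith
    obtain rfl : t₃ = 0 := by linarith
    exact Or.inr rfl
  have hD : c 0 4 1 - c 0 3 2 = 0 := (mul_eq_zero.mp h₀₄₄).resolve_left ht₁
  have h₂' : t₁ ^ 2 - t₁ - 6 * t₂ = 0 := (mul_eq_zero.mp h₂).resolve_left ht₁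
  have hroots : t₁ * (t₁ + 2) * (t₁ + 3) * (t₁ - 1) = 0 := by
    linear_combination -3 * h₁ - 2 * t₁ * (t₁ + 2) * h₂'
  simp only [mul_eq_zero] at hroots
  -- the roots `-2, -3, 1` contradict `hD`, `h₂₂₄`, `h₃₁₄`, `h₃₃₂`
  rcases hroots with ((h | h) | h) | h
  · obtain rfl : t₁ = 0 := h
    obtain rfl : t₂ = 0 := by linarith
    obtain rfl : t₃ = 0 := by linarith
    exact Or.inl rfl
  · obtain rfl : t₁ = -2 := by linarith
    obtain rfl : t₂ = 1 := by linarith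
    obtain rfl : t₃ = 2 := by linarith
    linarith
  · obtain rfl : t₁ = -3 := by linarith
    obtain rfl : t₂ = 2 := by linarith
    obtain rfl : t₃ = 5 := by linarith
    linarith
  · obtain rfl : t₁ = 1 := by linarith
    obtain rfl : t₂ = 0 := by linarith
    obtain rfl : t₃ = 1 := by linarith
    linarith

lemma params_of_coeff_vanishing {t₁ t₂ t₃ : ℤ} {S : MP}
    (hlead : coeff (expTUV 5 0 0) S = 1)
    (hsymm : ∀ k a b, coeff (expTUV k a b) S = coeff (expTUV k b a) S)
    (hvanish : ∀ k a b, a ≤ 4 ∧ 2 ≤ b ∧ b ≤ 4 →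
      coeff (expTUV k a b) ((U - V) * (quad t₁ t₂ t₃ (T + U) * S)) = 0) :
    (t₁, t₂, t₃) = (0, 0, 0) ∨ (t₁, t₂, t₃) = (-1, 0, 0) := by
  have h₆₀₂ := hvanish 6 0 2 (by decide)
  have h₅₀₃ := hvanish 5 0 3 (by decide)
  have h₅₁₂ := hvanish 5 1 2 (by decide)
  have h₄₂₂ := hvanish 4 2 2 (by decide)
  have h₄₀₄ := hvanish 4 0 4 (by decide)
  have h₄₁₃ := hvanish 4 1 3 (by decide)
  have h₃₁₄ := hvanish 3 1 4 (by decide)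
  have h₃₃₂ := hvanish 3 3 2 (by decide)
  have h₃₂₃ := hvanish 3 2 3 (by decide)
  have h₂₂₄ := hvanish 2 2 4 (by decide)
  have h₂₄₂ := hvanish 2 4 2 (by decide)
  have h₀₄₄ := hvanish 0 4 4 (by decide)
  simp only [← mul_assoc, sub_mul_quad_T_add_U]
    at h₆₀₂ h₅₀₃ h₅₁₂ h₄₂₂ h₄₀₄ h₄₁₃ h₃₁₄ h₃₃₂ h₃₂₃ h₂₂₄ h₂₄₂ h₀₄₄
  simp only [map_add, map_sub, sub_mul, add_mul, coeff_sub, coeff_add, coeff_monomial_mul',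
    expTUV_le_expTUV, expTUV_sub_expTUV, Nat.reduceLeDiff, nonpos_iff_eq_zero, one_ne_zero,
    zero_le, and_true, and_false, ↓reduceIte, Std.le_refl, Nat.one_le_ofNat, and_self,
    Nat.reduceSub, tsub_self, Nat.add_one_sub_one, one_mul, zero_sub, OfNat.ofNat_ne_zero,
    add_zero, sub_zero, mul_one, sub_self, tsub_zero, Nat.not_ofNat_le_one, zero_add, hlead,
    hsymm 4 0 1, hsymm 3 0 2, hsymm 2 1 2, hsymm 2 0 3, hsymm 1 0 4, hsymm 1 1 3, hsymm 0 1 4,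
    hsymm 0 2 3]
    at h₆₀₂ h₅₀₃ h₅₁₂ h₄₂₂ h₄₀₄ h₄₁₃ h₃₁₄ h₃₃₂ h₃₂₃ h₂₂₄ h₂₄₂ h₀₄₄
  exact params_of_coeff_equations (fun k a b => coeff (expTUV k a b) S)
    (by linear_combination -h₆₀₂) (by linear_combination -h₅₀₃) (by linear_combination h₅₁₂)
    (by linear_combination h₄₂₂) (by linear_combination -h₄₀₄) (by linear_combination h₄₁₃)
    (by linear_combination h₃₁₄) (by linear_combination h₃₃₂) (by linear_combination h₃₂₃)
    (by linear_combination h₂₂₄) (by linear_combination h₂₄₂) (by linear_combination h₀₄₄)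

/-- Chern polynomial equation for a uniform 7-bundle over `ℙ⁴` of splitting type `(2;2,5;1,0)`:
with `S₁(T,U,V) = T² + t₁(U+V)T + t₂⁰(U²+V²) + t₂¹UV`, if the product `S₁(T+U,U,V)·S₂(T,U,V)`,
where `S₂` is monic of degree 5 in `T` and symmetric in `(U,V)`, is congruent modulo the ideal
`(R⁴(U,V), U⁵) ⊆ ℤ[T,U,V]` to a polynomial in `T` and `U` alone plus multiples of `R⁴` and `R⁵`,
then `(t₁, t₂⁰, t₂¹)` is `(0,0,0)` or `(-1,0,0)`. -/
theorem uniform_rank7_splitting_25 (t₁ t₂ t₃ : ℤ) (S₂ : MP)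
    (hmonic : ∃ c : Fin 5 → MvPolynomial (Fin 2) ℤ,
      S₂ = T ^ 5 + ∑ i : Fin 5, rename (fun j : Fin 2 => j.succ) (c i) * T ^ (i : ℕ))
    (hsym : rename (Equiv.swap (1 : Fin 3) 2) S₂ = S₂)
    (h : ∃ (Q : MvPolynomial (Fin 2) ℤ) (A B : MP),
      quad t₁ t₂ t₃ (T + U) * S₂
          - (rename (fun j : Fin 2 => j.castSucc) Q + A * R 4 + B * R 5)
        ∈ Ideal.span {R 4, U ^ 5}) :
    (t₁, t₂, t₃) = (0, 0, 0) ∨ (t₁, t₂, t₃) = (-1, 0, 0) := by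
  obtain ⟨Q, A, B, hQ⟩ := h
  exact params_of_coeff_vanishing (coeff_expTUV_five_of_monic hmonic)
    (coeff_expTUV_comm_of_rename_swap hsym)
    fun _ _ _ hab => coeff_sub_mul_eq_zero_of_mem_span hQ hab.1 hab.2.1 hab.2.2
end
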